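/- arXiv:2305.09835 — 7 statements merged into one kernel-verified Lean document; each statement's English description precedes it below -/
import Mathlib

section
/- If ←G is a totally disconnected metric compactification of a countable group G, then there exists a nested decreasing sequence (Γ_n)_{n∈ℕ} of finite index normal subgroups of G with ⋂_n Γ_n={1_G} such that the G-odometer associated to (Γ_n) is topologically conjugate, as a G-system, to ←G equipped with the action of G by left multiplication. Consequently, G is residually finite if and only if G admits a totally disconnected metric compactification. -/
open Pointwise Filter Topology

/-- Each (finite) quotient `G ⧸ Γ` is given the discrete topology. -/
instance quotientDiscreteTopology {G : Type*} [Group G] (Γ : Subgroup G) :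
    TopologicalSpace (G ⧸ Γ) := ⊥

/-- The `G`-odometer associated to a nested decreasing sequence `(Γ n)` of subgroups of `G`:
the inverse limit of the canonical projections `G ⧸ Γ (n+1) → G ⧸ Γ n`, realized as the set of
compatible sequences in `Π n, G ⧸ Γ n`. `G` acts on it by coordinatewise left multiplication. -/
def GOdometer {G : Type*} [Group G] (Γ : ℕ → Subgroup G) : Set (Π n, G ⧸ Γ n) :=
  {y | ∀ (n : ℕ) (g : G), y (n + 1) = (g : G ⧸ Γ (n + 1)) → y n = (g : G ⧸ Γ n)}

/-- A totally disconnected metric compactification of a countable group `G`: a totally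
disconnected compact metrizable topological group together with an injective group homomorphism
from `G` with dense image. -/
structure TDMCompactification (G : Type*) [Group G] where
  space : Type*
  [grp : Group space]
  [top : TopologicalSpace space]
  [tgrp : IsTopologicalGroup space]
  [cpt : CompactSpace space]
  [metr : TopologicalSpace.MetrizableSpace space]
  [td : TotallyDisconnectedSpace space]
  emb : G →* space
  inj : Function.Injective emb
  dens : DenseRange emb

/-!
Since `H` is compact and totally disconnected, its open normal subgroups form a basis at `1`, and
metrizability lets us pick a decreasing sequence `U n` of them forming a basis, so `⋂ U n = 1`.
Density of `i` makes `G ⧸ i⁻¹(U n) → H ⧸ U n` bijective, so `h ↦ (h mod U n)ₙ` is a continuous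
equivariant map from `H` to the odometer of `Γ n = i⁻¹(U n)`; it is injective as `⋂ U n = 1` and
surjective by compactness (a point of the odometer prescribes a nested sequence of closed cosets).
Conversely, a chain `Γ n` with trivial intersection embeds `G` densely in the closure of its
diagonal image in `Π n, G ⧸ core(Γ n)`, a compact metrizable totally disconnected group.
-/

section OpenNormalBasis

variable {H : Type*} [Group H] [TopologicalSpace H] [IsTopologicalGroup H] [CompactSpace H]
  [TotallyDisconnectedSpace H]

theorem hasBasis_nhds_one_openNormalSubgroup :
    (𝓝 (1 : H)).HasBasis (fun _ : OpenNormalSubgroup H => True) (fun U => (U : Set H)) := by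
  refine ⟨fun s => ⟨fun hs => ?_, fun ⟨U, _, hUs⟩ =>
    mem_of_superset (U.isOpen.mem_nhds U.one_mem) hUs⟩⟩
  obtain ⟨U, hUs⟩ := ProfiniteGrp.exist_openNormalSubgroup_sub_open_nhds_of_one isOpen_interior
    (mem_interior_iff_mem_nhds.2 hs)
  exact ⟨U, trivial, hUs.trans interior_subset⟩

theorem exists_antitone_openNormalSubgroup_basis [FirstCountableTopology H] :
    ∃ U : ℕ → OpenNormalSubgroup H, (𝓝 (1 : H)).HasAntitoneBasis fun n => (U n : Set H) := by
  obtain ⟨U, -, hU⟩ :=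
    (hasBasis_nhds_one_openNormalSubgroup (H := H)).exists_antitone_subbasis
  exact ⟨U, hU⟩

end OpenNormalBasis

instance discreteTopology_quotient {G : Type*} [Group G] (Γ : Subgroup G) :
    DiscreteTopology (G ⧸ Γ) :=
  ⟨rfl⟩

theorem GOdometer.apply_eq_of_apply_succ_eq {G : Type*} [Group G] {Γ : ℕ → Subgroup G}
    {y z : Π n, G ⧸ Γ n} (hy : y ∈ GOdometer Γ) (hz : z ∈ GOdometer Γ) {n : ℕ}
    (h : y (n + 1) = z (n + 1)) : y n = z n := by
  obtain ⟨g, hg⟩ := QuotientGroup.mk_surjective (z (n + 1))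
  rw [hz n g hg.symm, hy n g (h.trans hg.symm)]

theorem QuotientGroup.map_comap_injective {G H : Type*} [Group G] [Group H] (f : G →* H)
    (N : Subgroup H) [N.Normal] :
    Function.Injective (QuotientGroup.map (N.comap f) N f le_rfl) := by
  intro a b hab
  induction a using QuotientGroup.induction_on
  induction b using QuotientGroup.induction_on
  exact QuotientGroup.eq.2 (by simpa using QuotientGroup.eq.1 hab)

section Odometer

variable {G H : Type*} [Group G] [Group H] [TopologicalSpace H] [IsTopologicalGroup H]
  {i : G →* H}

theorem DenseRange.exists_mk_eq (hi : DenseRange i) (U : OpenSubgroup H) (h : H) :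
    ∃ g, (i g : H ⧸ (U : Subgroup H)) = h := by
  obtain ⟨g, hg⟩ :=
    hi.exists_mem_open (U.isOpen.leftCoset h) ⟨h, (mem_leftCoset_iff h).2 (by simp)⟩
  exact ⟨g, (QuotientGroup.eq.2 ((mem_leftCoset_iff h).1 hg)).symm⟩

noncomputable def quotientComapMulEquiv (hi : DenseRange i) (U : OpenNormalSubgroup H) :
    G ⧸ (U : Subgroup H).comap i ≃* H ⧸ (U : Subgroup H) :=
  MulEquiv.ofBijective (QuotientGroup.map _ _ i le_rfl)
    ⟨QuotientGroup.map_comap_injective i U, fun q => by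
      induction q using QuotientGroup.induction_on with
      | H h =>
        obtain ⟨g, hg⟩ := hi.exists_mk_eq U.toOpenSubgroup h
        exact ⟨g, hg⟩⟩

@[simp]
theorem quotientComapMulEquiv_mk (hi : DenseRange i) (U : OpenNormalSubgroup H) (g : G) :
    quotientComapMulEquiv hi U g = (i g : H ⧸ (U : Subgroup H)) :=
  rfl

theorem finiteIndex_comap_openNormalSubgroup [CompactSpace H] (U : OpenNormalSubgroup H) :
    ((U : Subgroup H).comap i).FiniteIndex :=
  have : Finite (H ⧸ (U : Subgroup H)) := Subgroup.quotient_finite_of_isOpen _ U.isOpen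
  have : Finite (G ⧸ (U : Subgroup H).comap i) :=
    Finite.of_injective _ (QuotientGroup.map_comap_injective i U)
  Subgroup.finiteIndex_of_finite_quotient

variable (hi : DenseRange i) (U : ℕ → OpenNormalSubgroup H)

noncomputable def toOdometer (h : H) : Π n, G ⧸ (U n : Subgroup H).comap i :=
  fun n => (quotientComapMulEquiv hi (U n)).symm h

theorem toOdometer_eq_mk_iff (h : H) (n : ℕ) (g : G) :
    toOdometer hi U h n = g ↔ h⁻¹ * i g ∈ U n := by
  rw [toOdometer, MulEquiv.symm_apply_eq, quotientComapMulEquiv_mk, QuotientGroup.eq]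
  rfl

theorem toOdometer_mul (g : G) (h : H) (n : ℕ) :
    toOdometer hi U (i g * h) n = g • toOdometer hi U h n := by
  obtain ⟨a, ha⟩ := QuotientGroup.mk_surjective (toOdometer hi U h n)
  rw [← ha, (toOdometer_eq_mk_iff hi U _ n (g * a)).2]
  · rfl
  · simpa [mul_assoc] using (toOdometer_eq_mk_iff hi U h n a).1 ha.symm

theorem continuous_toOdometer : Continuous (toOdometer hi U) := by
  refine continuous_pi fun n => continuous_discrete_rng.2 fun q => ?_
  obtain ⟨g, rfl⟩ := QuotientGroup.mk_surjective q
  have hfiber : (toOdometer hi U · n) ⁻¹' {(g : G ⧸ (U n : Subgroup H).comap i)} =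
      (fun h => h⁻¹ * i g) ⁻¹' (U n : Set H) :=
    Set.ext fun h => toOdometer_eq_mk_iff hi U h n g
  rw [hfiber]
  exact (U n).isOpen.preimage (continuous_inv.mul continuous_const)

theorem toOdometer_mem (hU : Antitone fun n => (U n : Subgroup H)) (h : H) :
    toOdometer hi U h ∈ GOdometer fun n => (U n : Subgroup H).comap i := fun n g hg =>
  (toOdometer_eq_mk_iff hi U h n g).2 (hU n.le_succ ((toOdometer_eq_mk_iff hi U h _ g).1 hg))

theorem toOdometer_injective (hU : ⨅ n, (U n : Subgroup H) = ⊥) :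
    Function.Injective (toOdometer hi U) := by
  intro h h' hh
  have hmem : h⁻¹ * h' ∈ ⨅ n, (U n : Subgroup H) := Subgroup.mem_iInf.2 fun n =>
    QuotientGroup.eq.1 ((quotientComapMulEquiv hi (U n)).symm.injective (congrFun hh n))
  rwa [hU, Subgroup.mem_bot, inv_mul_eq_one] at hmem

theorem exists_toOdometer_eq [CompactSpace H] (hU : Antitone fun n => (U n : Subgroup H))
    {y : Π n, G ⧸ (U n : Subgroup H).comap i} (hy : y ∈ GOdometer _) :
    ∃ h, toOdometer hi U h = y := by
  set C : ℕ → Set H := fun n => (toOdometer hi U · n) ⁻¹' {y n}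
  have hC : (⋂ n, C n).Nonempty := by
    refine IsCompact.nonempty_iInter_of_sequence_nonempty_isCompact_isClosed C
      (fun n h hh => GOdometer.apply_eq_of_apply_succ_eq (toOdometer_mem hi U hU h) hy hh)
      (fun n => (quotientComapMulEquiv hi (U n)).symm.surjective.comp QuotientGroup.mk_surjective
        (y n)) ?_ fun n => ?_
    · exact (isClosed_singleton.preimage ((continuous_apply 0).comp
        (continuous_toOdometer hi U))).isCompact
    · exact isClosed_singleton.preimage ((continuous_apply n).comp (continuous_toOdometer hi U))
  obtain ⟨h, hh⟩ := hC
  exact ⟨h, funext (Set.mem_iInter.1 hh)⟩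

variable [CompactSpace H] (hU : Antitone fun n => (U n : Subgroup H))
  (hbot : ⨅ n, (U n : Subgroup H) = ⊥)

noncomputable def odometerHomeomorph : H ≃ₜ GOdometer fun n => (U n : Subgroup H).comap i :=
  let F : H → GOdometer fun n => (U n : Subgroup H).comap i :=
    fun h => ⟨toOdometer hi U h, toOdometer_mem hi U hU h⟩
  have hF : Function.Bijective F :=
    ⟨fun _ _ h => toOdometer_injective hi U hbot (congrArg Subtype.val h),
      fun y => (exists_toOdometer_eq hi U hU y.2).imp fun _ h => Subtype.ext h⟩
  Continuous.homeoOfEquivCompactToT2 (f := Equiv.ofBijective F hF)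
    ((continuous_toOdometer hi U).subtype_mk _)

@[simp]
theorem coe_odometerHomeomorph (h : H) :
    (odometerHomeomorph hi U hU hbot h : Π n, G ⧸ (U n : Subgroup H).comap i) =
      toOdometer hi U h :=
  rfl

theorem odometerHomeomorph_symm_eq_mul (g : G)
    (y z : GOdometer fun n => (U n : Subgroup H).comap i)
    (hz : ∀ n, (z : Π n, G ⧸ (U n : Subgroup H).comap i) n =
      g • (y : Π n, G ⧸ (U n : Subgroup H).comap i) n) :
    (odometerHomeomorph hi U hU hbot).symm z = i g * (odometerHomeomorph hi U hU hbot).symm y := by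
  set F := odometerHomeomorph hi U hU hbot
  rw [Homeomorph.symm_apply_eq]
  refine Subtype.ext (funext fun n => ?_)
  rw [coe_odometerHomeomorph, toOdometer_mul, hz n, ← coe_odometerHomeomorph hi U hU hbot,
    F.apply_symm_apply]

end Odometer

theorem exists_gOdometer_conjugate {G H : Type*} [Group G] [Group H]
    [TopologicalSpace H] [IsTopologicalGroup H] [CompactSpace H]
    [TopologicalSpace.MetrizableSpace H] [TotallyDisconnectedSpace H]
    {i : G →* H} (hinj : Function.Injective i) (hi : DenseRange i) :
    ∃ Γ : ℕ → Subgroup G,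
      Antitone Γ ∧ (∀ n, (Γ n).Normal) ∧ (∀ n, (Γ n).FiniteIndex) ∧ (⨅ n, Γ n) = ⊥ ∧
      ∃ e : GOdometer Γ ≃ₜ H,
        ∀ (g : G) (y z : GOdometer Γ),
          (∀ n, (z : Π n, G ⧸ Γ n) n = g • (y : Π n, G ⧸ Γ n) n) → e z = i g * e y := by
  obtain ⟨U, hU⟩ := exists_antitone_openNormalSubgroup_basis (H := H)
  have hanti : Antitone fun n => (U n : Subgroup H) := fun _ _ hmn => hU.antitone hmn
  have hbot : ⨅ n, (U n : Subgroup H) = ⊥ := by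
    refine (Subgroup.eq_bot_iff_forall _).2 fun x hx => ?_
    have hx' : x ∈ ⋂ n, ⋂ (_ : True), (U n : Set H) :=
      Set.mem_iInter₂.2 fun n _ => Subgroup.mem_iInf.1 hx n
    rwa [biInter_basis_nhds hU.toHasBasis] at hx'
  refine ⟨fun n => (U n : Subgroup H).comap i, fun _ _ hmn => Subgroup.comap_mono (hanti hmn),
    fun n => inferInstance, fun n => finiteIndex_comap_openNormalSubgroup (U n), ?_,
    (odometerHomeomorph hi U hanti hbot).symm, odometerHomeomorph_symm_eq_mul hi U hanti hbot⟩
  rw [← Subgroup.comap_iInf, hbot, MonoidHom.comap_bot, MonoidHom.ker_eq_bot_iff]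
  exact hinj

universe u v

/- `TDMCompactification.{u, v} G` asks for a carrier in an arbitrary universe `v`; `Shrink` moves a
small compactification there. -/
theorem TDMCompactification.nonempty_of_small {G : Type u} [Group G] {K : Type*} [Group K]
    [TopologicalSpace K] [IsTopologicalGroup K] [CompactSpace K]
    [TopologicalSpace.MetrizableSpace K] [TotallyDisconnectedSpace K] [Small.{v} K]
    {j : G →* K} (hinj : Function.Injective j) (hj : DenseRange j) :
    Nonempty (TDMCompactification.{u, v} G) :=
  let e : K ≃ₜ Shrink.{v} K := Shrink.homeomorph K
  have : IsTopologicalGroup (Shrink.{v} K) := e.symm.isInducing.topologicalGroup Shrink.mulEquiv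
  have : CompactSpace (Shrink.{v} K) := e.compactSpace
  have : TopologicalSpace.MetrizableSpace (Shrink.{v} K) := e.symm.isEmbedding.metrizableSpace
  have : TotallyDisconnectedSpace (Shrink.{v} K) := e.totallyDisconnectedSpace
  ⟨⟨Shrink.{v} K, (Shrink.mulEquiv : Shrink.{v} K ≃* K).symm.toMonoidHom.comp j,
    e.injective.comp hinj, e.surjective.denseRange.comp hj e.continuous⟩⟩

theorem nonempty_tDMCompactification_of_iInf_eq_bot {G : Type u} [Group G] (Γ : ℕ → Subgroup G)
    [∀ n, (Γ n).FiniteIndex] (hbot : ⨅ n, Γ n = ⊥) : Nonempty (TDMCompactification.{u, v} G) := by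
  let φ : G →* Π n, G ⧸ (Γ n).normalCore := MonoidHom.pi fun n => QuotientGroup.mk' _
  have hφ : Function.Injective φ := by
    refine (MonoidHom.ker_eq_bot_iff φ).1 (eq_bot_iff.2 fun g hg => ?_)
    have hg' : g ∈ ⨅ n, Γ n := Subgroup.mem_iInf.2 fun n =>
      (Γ n).normalCore_le ((QuotientGroup.eq_one_iff g).1 (congrFun hg n))
    rwa [hbot] at hg'
  let K := φ.range.topologicalClosure
  have : CompactSpace K :=
    isCompact_iff_compactSpace.1 (Subgroup.isClosed_topologicalClosure _).isCompact
  have : TopologicalSpace.MetrizableSpace K := Topology.IsEmbedding.subtypeVal.metrizableSpace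
  have hK : DenseRange (Set.inclusion φ.range.le_topologicalClosure) :=
    (denseRange_inclusion_iff _).2 subset_rfl
  exact TDMCompactification.nonempty_of_small
    (j := (Subgroup.inclusion φ.range.le_topologicalClosure).comp φ.rangeRestrict)
    ((Subgroup.inclusion_injective φ.range.le_topologicalClosure).comp
      (φ.rangeRestrict_injective_iff.2 hφ))
    (hK.comp φ.rangeRestrict_surjective.denseRange (continuous_inclusion _))

attribute [local instance] TDMCompactification.grp TDMCompactification.top TDMCompactification.tgrp
  TDMCompactification.cpt TDMCompactification.metr TDMCompactification.td

theorem statement3_general {G : Type*} [Group G]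
    (H : Type*) [Group H] [TopologicalSpace H] [IsTopologicalGroup H] [CompactSpace H]
    [TopologicalSpace.MetrizableSpace H] [TotallyDisconnectedSpace H]
    (i : G →* H) (hinj : Function.Injective i) (hdense : DenseRange i) :
    (∃ Γ : ℕ → Subgroup G,
      Antitone Γ ∧ (∀ n, (Γ n).Normal) ∧ (∀ n, (Γ n).FiniteIndex) ∧ (⨅ n, Γ n) = ⊥ ∧
      -- a `G`-equivariant homeomorphism between the odometer and `H`
      ∃ e : GOdometer Γ ≃ₜ H,
        ∀ (g : G) (y z : GOdometer Γ),
          (∀ n, (z : Π n, G ⧸ Γ n) n = g • (y : Π n, G ⧸ Γ n) n) → e z = i g * e y) ∧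
    -- consequently: residual finiteness is equivalent to admitting such a compactification
    ((∃ Γ : ℕ → Subgroup G, Antitone Γ ∧ (∀ n, (Γ n).FiniteIndex) ∧ (⨅ n, Γ n) = ⊥) ↔
      Nonempty (TDMCompactification G)) := by
  refine ⟨exists_gOdometer_conjugate hinj hdense, ?_, ?_⟩
  · rintro ⟨Γ, -, hfi, hbot⟩
    exact nonempty_tDMCompactification_of_iInf_eq_bot Γ hbot
  · rintro ⟨c⟩
    obtain ⟨Γ, hanti, -, hfi, hbot, -⟩ := exists_gOdometer_conjugate c.inj c.dens
    exact ⟨Γ, hanti, hfi, hbot⟩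

/-- If `H = ←G` is a totally disconnected metric compactification of a
countable group `G`, then there exists a nested decreasing sequence `(Γ n)` of finite index
normal subgroups of `G` with trivial intersection such that the `G`-odometer associated to
`(Γ n)` is topologically conjugate, as a `G`-system, to `H` equipped with the action of `G` by
left multiplication. Consequently, `G` is residually finite if and only if `G` admits a totally
disconnected metric compactification. -/
theorem statement3 {G : Type*} [Group G] [Countable G]
    (H : Type*) [Group H] [TopologicalSpace H] [IsTopologicalGroup H] [CompactSpace H]
    [TopologicalSpace.MetrizableSpace H] [TotallyDisconnectedSpace H]
    (i : G →* H) (hinj : Function.Injective i) (hdense : DenseRange i) :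
    (∃ Γ : ℕ → Subgroup G,
      Antitone Γ ∧ (∀ n, (Γ n).Normal) ∧ (∀ n, (Γ n).FiniteIndex) ∧ (⨅ n, Γ n) = ⊥ ∧
      -- a `G`-equivariant homeomorphism between the odometer and `H`
      ∃ e : GOdometer Γ ≃ₜ H,
        ∀ (g : G) (y z : GOdometer Γ),
          (∀ n, (z : Π n, G ⧸ Γ n) n = g • (y : Π n, G ⧸ Γ n) n) → e z = i g * e y) ∧
    -- consequently: residual finiteness is equivalent to admitting such a compactification
    ((∃ Γ : ℕ → Subgroup G, Antitone Γ ∧ (∀ n, (Γ n).FiniteIndex) ∧ (⨅ n, Γ n) = ⊥) ↔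
      Nonempty (TDMCompactification G)) :=
  statement3_general H i hinj hdense
end

section
/- Let G be a countable residually finite group and let (Γ_n)_{n∈ℕ} be a strictly decreasing sequence of finite index subgroups of G with ⋂_n Γ_n={1_G}. Then there exist an increasing sequence (n_i)_{i∈ℕ} of natural numbers and a sequence (D_i)_{i∈ℕ} of finite subsets of G such that: (1) 1_G∈D_i⊆D_{i+1} for every i; (2) D_i is a fundamental domain of G/Γ_{n_i} for every i; (3) G=⋃_{i∈ℕ} D_i; (4) D_j=⋃_{v∈D_j∩Γ_{n_i}} vD_i for every j>i≥1. -/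
open Pointwise

/-- `D` is a fundamental domain of `G / Γ`: every `g ∈ G` can be written uniquely as
`g = γ u` with `γ ∈ Γ` and `u ∈ D`. -/
def IsFundDomain {G : Type*} [Group G] (Γ : Subgroup G) (D : Finset G) : Prop :=
  ∀ g : G, ∃! p : G × G, p.1 ∈ Γ ∧ p.2 ∈ D ∧ g = p.1 * p.2

lemma exists_transversal {G : Type*} [Group G] (Γ' Γ : Subgroup G) [Γ'.FiniteIndex]
    (hle : Γ' ≤ Γ) (γ : G) (hγ : γ ∈ Γ) (hγ' : γ ∉ Γ' ∨ γ = 1) :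
    ∃ T : Finset G, ↑T ⊆ (Γ : Set G) ∧ (1 : G) ∈ T ∧ γ ∈ T ∧
      ∀ x ∈ Γ, ∃! p : G × G, p.1 ∈ Γ' ∧ p.2 ∈ T ∧ x = p.1 * p.2 := by
  classical
  set Q := Quotient (QuotientGroup.rightRel Γ') with hQ
  haveI : Finite Q :=
    Finite.of_equiv _ (QuotientGroup.quotientRightRelEquivQuotientLeftRel Γ').symm
  set mk : G → Q := fun x => Quotient.mk _ x with hmk
  set aux : Q → G := fun q => if q = mk γ then γ else if q = mk 1 then 1 else q.out with haux
  set rep : G → G := fun x => aux (mk x) with hrep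
  -- (a) rep x is in the same right coset as x
  have ha : ∀ x : G, rep x * x⁻¹ ∈ Γ' := by
    intro x
    simp only [hrep, haux]
    split_ifs with h1 h2
    · have : (QuotientGroup.rightRel Γ') x γ := Quotient.exact h1
      exact (QuotientGroup.rightRel_apply).mp this
    · have : (QuotientGroup.rightRel Γ') x 1 := Quotient.exact h2
      have := (QuotientGroup.rightRel_apply).mp this
      simpa using this
    · have : (QuotientGroup.rightRel Γ') ((mk x).out) x := Quotient.exact (Quotient.out_eq (mk x))
      have hx := (QuotientGroup.rightRel_apply).mp this
      simpa using Γ'.inv_mem hx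
  -- (b) rep depends only on the coset
  have hb : ∀ x y : G, y * x⁻¹ ∈ Γ' → rep x = rep y := by
    intro x y h
    have : mk x = mk y := Quotient.sound ((QuotientGroup.rightRel_apply).mpr h)
    simp only [hrep, this]
  have hrepγ : rep γ = γ := by simp only [hrep, haux, if_pos rfl]
  have hrep1 : rep 1 = 1 := by
    rcases hγ' with h | h
    · have hne : mk 1 ≠ mk γ := by
        intro hcontr
        have : (QuotientGroup.rightRel Γ') 1 γ := Quotient.exact hcontr
        have := (QuotientGroup.rightRel_apply).mp this
        simp only [inv_one, mul_one] at this
        exact h this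
      simp only [hrep, haux, if_neg hne, if_pos rfl]
      simp
    · rw [h] at hrepγ
      exact hrepγ
  have hmem : ∀ x, x ∈ Γ → rep x ∈ Γ := by
    intro x hx
    have : rep x = (rep x * x⁻¹) * x := by group
    rw [this]
    exact Γ.mul_mem (hle (ha x)) hx
  have hidem : ∀ x, rep (rep x) = rep x := by
    intro x
    exact hb (rep x) x (by simpa using Γ'.inv_mem (ha x))
  have hfin : (rep '' (Γ : Set G)).Finite := by
    refine (Set.finite_range aux).subset ?_
    rintro _ ⟨x, _, rfl⟩
    exact ⟨mk x, rfl⟩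
  refine ⟨hfin.toFinset, ?_, ?_, ?_, ?_⟩
  · intro x hx
    rw [Set.Finite.coe_toFinset] at hx
    obtain ⟨y, hy, rfl⟩ := hx
    exact hmem y hy
  · rw [Set.Finite.mem_toFinset]
    exact ⟨1, Γ.one_mem, hrep1⟩
  · rw [Set.Finite.mem_toFinset]
    exact ⟨γ, hγ, hrepγ⟩
  · intro x hx
    refine ⟨(x * (rep x)⁻¹, rep x), ⟨by simpa using Γ'.inv_mem (ha x), ?_, by group⟩, ?_⟩
    · rw [Set.Finite.mem_toFinset]; exact ⟨x, hx, rfl⟩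
    · rintro ⟨c, t⟩ ⟨hc, ht, hct⟩
      rw [Set.Finite.mem_toFinset] at ht
      obtain ⟨y, hy, hyt⟩ := ht
      simp only at hc hct hyt
      have hcx : x * t⁻¹ ∈ Γ' := by
        have : x * t⁻¹ = c := by rw [hct]; group
        rw [this]; exact hc
      have h1 : t = rep x := by
        rw [← hyt] at hcx ⊢
        exact ((hb (rep y) x hcx).symm.trans (hidem y)).symm
      have h2 : c = x * (rep x)⁻¹ := by
        rw [← h1, hct]; group
      rw [Prod.ext_iff]
      exact ⟨h2, h1⟩

lemma mem_inter_eq_one {G : Type*} [Group G] {Γ : Subgroup G} {D : Finset G}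
    (hD : IsFundDomain Γ D) (h1 : (1 : G) ∈ D) {u : G} (huD : u ∈ D) (huΓ : u ∈ Γ) :
    u = 1 := by
  obtain ⟨p, _, huniq⟩ := hD u
  have e1 : ((u, 1) : G × G) = p := huniq (u, 1) ⟨huΓ, h1, (mul_one u).symm⟩
  have e2 : ((1, u) : G × G) = p := huniq (1, u) ⟨Γ.one_mem, huD, (one_mul u).symm⟩
  have := e1.trans e2.symm
  exact (Prod.ext_iff.mp this).1

lemma fundDomain_mul {G : Type*} [Group G] [DecidableEq G] (Γ' Γ : Subgroup G) (hle : Γ' ≤ Γ)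
    (D T : Finset G) (hD : IsFundDomain Γ D) (hT : ↑T ⊆ (Γ : Set G))
    (htrans : ∀ x ∈ Γ, ∃! p : G × G, p.1 ∈ Γ' ∧ p.2 ∈ T ∧ x = p.1 * p.2) :
    IsFundDomain Γ' (T * D) := by
  intro g
  obtain ⟨⟨γ, u⟩, ⟨hγ, hu, hgu⟩, huniq⟩ := hD g
  simp only at hγ hu hgu huniq
  obtain ⟨⟨c, t⟩, ⟨hc, ht, hct⟩, huniq2⟩ := htrans γ hγ
  simp only at hc ht hct huniq2
  refine ⟨(c, t * u), ⟨hc, Finset.mul_mem_mul ht hu, by rw [hgu, hct, mul_assoc]⟩, ?_⟩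
  rintro ⟨c', m⟩ ⟨hc', hm, hgm⟩
  simp only at hc' hm hgm
  obtain ⟨t', ht', u', hu', hm'⟩ := Finset.mem_mul.mp hm
  have h1 : ((c' * t', u') : G × G) = (γ, u) := by
    refine huniq (c' * t', u') ⟨Γ.mul_mem (hle hc') (hT ht'), hu', ?_⟩
    rw [hgm, ← hm', mul_assoc]
  obtain ⟨h1a, h1b⟩ := Prod.ext_iff.mp h1
  simp only at h1a h1b
  have h2 : ((c', t') : G × G) = (c, t) := huniq2 (c', t') ⟨hc', ht', h1a.symm⟩
  obtain ⟨h2a, h2b⟩ := Prod.ext_iff.mp h2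
  simp only at h2a h2b
  rw [Prod.ext_iff]
  refine ⟨h2a, ?_⟩
  simp only
  rw [← hm', h2b, h1b]

lemma union_eq {G : Type*} [Group G] [DecidableEq G] (Γi : Subgroup G) (Di Dj S : Finset G)
    (hFD : IsFundDomain Γi Di) (h1 : (1 : G) ∈ Di)
    (hS : ↑S ⊆ (Γi : Set G)) (hDj : Dj = S * Di) :
    (Dj : Set G) = ⋃ v ∈ (Dj : Set G) ∩ (Γi : Set G), v • (Di : Set G) := by
  have key : (Dj : Set G) ∩ ↑Γi = ↑S := by
    ext x
    constructor
    · rintro ⟨hxD, hxΓ⟩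
      rw [hDj] at hxD
      obtain ⟨s, hs, d, hd, hsd⟩ := Finset.mem_mul.mp hxD
      have hsΓ : s ∈ Γi := hS hs
      have hdΓ : d ∈ Γi := by
        have : d = s⁻¹ * x := by rw [← hsd]; group
        rw [this]
        exact Γi.mul_mem (Γi.inv_mem hsΓ) hxΓ
      have hd1 : d = 1 := mem_inter_eq_one hFD h1 hd hdΓ
      have hxs : x = s := by rw [← hsd, hd1, mul_one]
      rw [hxs]; exact hs
    · intro hx
      refine ⟨?_, hS hx⟩
      rw [hDj]
      have h := Finset.mul_mem_mul (Finset.mem_coe.mp hx) h1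
      rw [mul_one] at h
      exact Finset.mem_coe.mpr h
  rw [key]
  ext x
  simp only [Set.mem_iUnion, exists_prop, Set.mem_smul_set, Finset.mem_coe, smul_eq_mul]
  constructor
  · intro hx
    rw [hDj] at hx
    obtain ⟨s, hs, d, hd, hsd⟩ := Finset.mem_mul.mp hx
    exact ⟨s, hs, d, hd, hsd⟩
  · rintro ⟨s, hs, d, hd, rfl⟩
    rw [hDj]
    exact Finset.mul_mem_mul hs hd

/-- Let `G` be a countable residually finite group and let `(Γ n)` be a
strictly decreasing sequence of finite index subgroups of `G` with trivial intersection. Then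
there exist an increasing sequence `(n i)` of natural numbers and a sequence `(D i)` of finite
subsets of `G` such that: (1) `1 ∈ D i ⊆ D (i+1)`; (2) `D i` is a fundamental domain of
`G ⧸ Γ (n i)`; (3) `G = ⋃ i, D i`; (4) `D j = ⋃_{v ∈ D j ∩ Γ (n i)} v • D i` for `j > i`. -/
theorem statement5 {G : Type*} [Group G] [Countable G]
    (Γ : ℕ → Subgroup G) (hanti : StrictAnti Γ) (hfi : ∀ k, (Γ k).FiniteIndex)
    (hint : (⨅ k, Γ k) = ⊥) :
    ∃ (n : ℕ → ℕ) (D : ℕ → Finset G), StrictMono n ∧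
      (∀ i, (1 : G) ∈ D i ∧ D i ⊆ D (i + 1)) ∧
      (∀ i, IsFundDomain (Γ (n i)) (D i)) ∧
      (∀ g : G, ∃ i, g ∈ D i) ∧
      (∀ i j, i < j →
        (D j : Set G) = ⋃ v ∈ (D j : Set G) ∩ (Γ (n i) : Set G), v • (D i : Set G)) := by
  classical
  obtain ⟨e, he⟩ := exists_surjective_nat G
  -- deeper subgroups avoiding a given element
  have hdeep : ∀ (m : ℕ) (γ : G), ∃ m', m < m' ∧ (γ ∉ Γ m' ∨ γ = 1) := by
    intro m γ
    by_cases hγ : γ = 1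
    · exact ⟨m + 1, Nat.lt_succ_self m, Or.inr hγ⟩
    · have : γ ∉ (⨅ k, Γ k) := by rw [hint]; simpa using hγ
      rw [Subgroup.mem_iInf] at this
      push_neg at this
      obtain ⟨k, hk⟩ := this
      refine ⟨max (m + 1) k, lt_of_lt_of_le (Nat.lt_succ_self m) (le_max_left _ _), Or.inl ?_⟩
      intro hmem
      exact hk (hanti.antitone (le_max_right (m + 1) k) hmem)
  -- base fundamental domain
  have base : ∃ D0 : Finset G, (1 : G) ∈ D0 ∧ IsFundDomain (Γ 0) D0 := by
    haveI := hfi 0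
    obtain ⟨T, _, h1T, _, htrans⟩ :=
      exists_transversal (Γ 0) ⊤ le_top 1 trivial (Or.inr rfl)
    exact ⟨T, h1T, fun g => htrans g trivial⟩
  obtain ⟨D0, h1D0, hFD0⟩ := base
  -- the recursion step
  have step : ∀ (i : ℕ) (p : ℕ × Finset G), ∃ q : ℕ × Finset G,
      ((1 : G) ∈ p.2 → IsFundDomain (Γ p.1) p.2 →
        (p.1 < q.1 ∧ (1 : G) ∈ q.2 ∧ IsFundDomain (Γ q.1) q.2 ∧ e i ∈ q.2 ∧
          ∃ T : Finset G, ↑T ⊆ (Γ p.1 : Set G) ∧ (1 : G) ∈ T ∧ q.2 = T * p.2)) := by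
    intro i p
    by_cases h1 : (1 : G) ∈ p.2
    · by_cases hFD : IsFundDomain (Γ p.1) p.2
      · obtain ⟨⟨γ, u⟩, ⟨hγ, hu, hgu⟩, -⟩ := hFD (e i)
        simp only at hγ hu hgu
        obtain ⟨m', hm', hγ'⟩ := hdeep p.1 γ
        haveI := hfi m'
        obtain ⟨T, hTsub, h1T, hγT, htrans⟩ :=
          exists_transversal (Γ m') (Γ p.1) (hanti.antitone hm'.le) γ hγ hγ'
        refine ⟨(m', T * p.2), fun _ _ => ⟨hm', ?_, ?_, ?_, T, hTsub, h1T, rfl⟩⟩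
        · have h := Finset.mul_mem_mul h1T h1
          rwa [mul_one] at h
        · exact fundDomain_mul (Γ m') (Γ p.1) (hanti.antitone hm'.le) p.2 T hFD hTsub htrans
        · rw [hgu]
          exact Finset.mul_mem_mul hγT hu
      · exact ⟨p, fun _ h => absurd h hFD⟩
    · exact ⟨p, fun h => absurd h h1⟩
  choose F hF using step
  set seq : ℕ → ℕ × Finset G := fun i => Nat.rec (0, D0) (fun i p => F i p) i with hseq
  set n : ℕ → ℕ := fun i => (seq i).1 with hn
  set D : ℕ → Finset G := fun i => (seq i).2 with hD
  have inv : ∀ i, (1 : G) ∈ D i ∧ IsFundDomain (Γ (n i)) (D i) := by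
    intro i
    induction i with
    | zero => exact ⟨h1D0, hFD0⟩
    | succ i ih =>
      have h := hF i (seq i) ih.1 ih.2
      exact ⟨h.2.1, h.2.2.1⟩
  have stepprop : ∀ i, n i < n (i + 1) ∧ e i ∈ D (i + 1) ∧
      ∃ T : Finset G, ↑T ⊆ (Γ (n i) : Set G) ∧ (1 : G) ∈ T ∧ D (i + 1) = T * D i := by
    intro i
    have h := hF i (seq i) (inv i).1 (inv i).2
    exact ⟨h.1, h.2.2.2.1, h.2.2.2.2⟩
  have hmono : StrictMono n := strictMono_nat_of_lt_succ fun i => (stepprop i).1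
  refine ⟨n, D, hmono, ?_, fun i => (inv i).2, ?_, ?_⟩
  · intro i
    refine ⟨(inv i).1, ?_⟩
    obtain ⟨-, -, T, hTsub, h1T, hDe⟩ := stepprop i
    intro x hx
    rw [hDe]
    have h := Finset.mul_mem_mul h1T hx
    rwa [one_mul] at h
  · intro g
    obtain ⟨i, rfl⟩ := he g
    exact ⟨i + 1, (stepprop i).2.1⟩
  · -- property (4)
    have hS : ∀ i j, i < j → ∃ S : Finset G, ↑S ⊆ (Γ (n i) : Set G) ∧ D j = S * D i := by
      intro i j hij
      induction j, hij using Nat.le_induction with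
      | base =>
        obtain ⟨-, -, T, hTsub, -, hDe⟩ := stepprop i
        exact ⟨T, hTsub, hDe⟩
      | succ j hij ih =>
        obtain ⟨S, hSsub, hDj⟩ := ih
        obtain ⟨-, -, T, hTsub, -, hDe⟩ := stepprop j
        refine ⟨T * S, ?_, by rw [hDe, hDj, mul_assoc]⟩
        rw [Finset.coe_mul]
        rintro x ⟨t, ht, s, hs, rfl⟩
        have htΓ : t ∈ Γ (n i) := hanti.antitone (hmono.monotone (le_of_lt hij)) (hTsub ht)
        exact (Γ (n i)).mul_mem htΓ (hSsub hs)
    intro i j hij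
    obtain ⟨S, hSsub, hDj⟩ := hS i j hij
    exact union_eq (Γ (n i)) (D i) (D j) S (inv i).2 (inv i).1 hSsub hDj
end

section
/- Let (X,φ,G) and (Y,ψ,G) be topological dynamical systems given by continuous actions of a countable group G on compact metric spaces, let π:X→Y be a factor map, let ν be an invariant Borel probability measure of (Y,ψ,G), and let μ be the invariant probability measure on the sigma-algebra π⁻¹β(Y)={π⁻¹(A) : A∈β(Y)} defined by μ(π⁻¹(A))=ν(A). If ν({y∈Y : |π⁻¹{y}|>1})=0, then μ extends to a unique invariant Borel probability measure on X. -/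
/-!
Off the `ν`-null set `N` of points with a nontrivial fibre, `π` is a continuous injection on
the Borel set `π⁻¹ Nᶜ` of a Polish space, hence (Lusin–Souslin) a Borel isomorphism onto `Nᶜ`.
So `ν` has exactly one lift along `π`, namely its transport through this isomorphism, and the
lift of `ψ`-invariant `ν` is `φ`-invariant because `φ g` carries lifts of `ν` to lifts of
`(ψ g)_* ν = ν`.
-/

open MeasureTheory Measure Set

theorem Set.injOn_preimage_compl_of_nontrivial_fibers_subset {X Y : Type*} {f : X → Y}
    {N : Set Y} (hN : {y | (f ⁻¹' {y}).Nontrivial} ⊆ N) : InjOn f (f ⁻¹' Nᶜ) := by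
  intro x hx x' _ hxx'
  by_contra hne
  exact hx (hN ⟨x, rfl, x', hxx'.symm, hne⟩)

namespace MeasureTheory.Measure

variable {X Y : Type*} [MeasurableSpace X] [MeasurableSpace Y] {f : X → Y} {S : Set X}

theorem map_map_comap_domRestrict (hf : Measurable f) (he : MeasurableEmbedding (S.domRestrict f))
    (ν : Measure Y) : ((ν.comap (S.domRestrict f)).map (↑)).map f = ν.restrict (f '' S) := by
  rw [map_map hf measurable_subtype_coe, ← range_domRestrict, ← he.map_comap]
  rfl

theorem eq_map_comap_domRestrict (hf : Measurable f) (hS : MeasurableSet S)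
    (he : MeasurableEmbedding (S.domRestrict f)) {μ : Measure X} (hμ : μ Sᶜ = 0) :
    μ = ((μ.map f).comap (S.domRestrict f)).map (↑) := by
  have hsub : (μ.comap (↑)).map ((↑) : S → X) = μ := by
    rw [map_comap_subtype_coe hS, restrict_eq_self_of_ae_mem (ae_iff.2 hμ)]
  have hmap : (μ.comap (↑)).map (S.domRestrict f) = μ.map f := by
    conv_rhs => rw [← hsub, map_map hf measurable_subtype_coe]
    rfl
  calc μ = (μ.comap (↑)).map ((↑) : S → X) := hsub.symm
    _ = (((μ.comap (↑)).map (S.domRestrict f)).comap (S.domRestrict f)).map ((↑) : S → X) := by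
      rw [he.comap_map]
    _ = ((μ.map f).comap (S.domRestrict f)).map (↑) := by rw [hmap]

variable [TopologicalSpace X] [PolishSpace X] [BorelSpace X]
  [TopologicalSpace Y] [T2Space Y] [BorelSpace Y]

theorem existsUnique_map_eq_of_nontrivial_fibers_null (hf : Continuous f)
    (hsurj : Function.Surjective f) {ν : Measure Y}
    (hν : ν {y | (f ⁻¹' {y}).Nontrivial} = 0) : ∃! μ : Measure X, μ.map f = ν := by
  set N := toMeasurable ν {y | (f ⁻¹' {y}).Nontrivial}
  have hNmeas : MeasurableSet N := measurableSet_toMeasurable _ _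
  have hNnull : ν N = 0 := by rwa [measure_toMeasurable]
  have hS : MeasurableSet (f ⁻¹' Nᶜ) := hf.measurable hNmeas.compl
  have he : MeasurableEmbedding ((f ⁻¹' Nᶜ).domRestrict f) :=
    hf.continuousOn.measurableEmbedding hS
      (injOn_preimage_compl_of_nontrivial_fibers_subset (subset_toMeasurable _ _))
  refine ⟨(ν.comap ((f ⁻¹' Nᶜ).domRestrict f)).map (↑), ?_, fun μ hμ => ?_⟩
  · change map f _ = ν
    rw [map_map_comap_domRestrict hf.measurable he, image_preimage_eq _ hsurj]
    exact restrict_eq_self_of_ae_mem (compl_mem_ae_iff.2 hNnull)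
  · have hμS : μ (f ⁻¹' Nᶜ)ᶜ = 0 := by
      rw [← preimage_compl, compl_compl, ← map_apply hf.measurable hNmeas, hμ, hNnull]
    rw [eq_map_comap_domRestrict hf.measurable hS he hμS, hμ]

end MeasureTheory.Measure

theorem statement6_general {G : Type*}
    {X : Type*} [MetricSpace X] [CompactSpace X] [MeasurableSpace X] [BorelSpace X]
    {Y : Type*} [MetricSpace Y] [MeasurableSpace Y] [BorelSpace Y]
    (φ : G → X → X) (hφcont : ∀ g, Continuous (φ g))
    (ψ : G → Y → Y) (hψcont : ∀ g, Continuous (ψ g))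
    (π : X → Y) (hπcont : Continuous π) (hπsurj : Function.Surjective π)
    (hπequiv : ∀ (g : G) (x : X), π (φ g x) = ψ g (π x))
    (ν : Measure Y) [IsProbabilityMeasure ν] (hνinv : ∀ g : G, Measure.map (ψ g) ν = ν)
    (hsingle : ν {y : Y | (π ⁻¹' {y}).Nontrivial} = 0) :
    ∃! μ' : Measure X, IsProbabilityMeasure μ' ∧
      (∀ g : G, Measure.map (φ g) μ' = μ') ∧
      ∀ A : Set Y, MeasurableSet A → μ' (π ⁻¹' A) = ν A := by
  have lift_iff : ∀ μ : Measure X,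
      μ.map π = ν ↔ ∀ A : Set Y, MeasurableSet A → μ (π ⁻¹' A) = ν A := fun μ =>
    ⟨fun h A hA => by rw [← h, map_apply hπcont.measurable hA],
      fun h => ext fun A hA => by rw [map_apply hπcont.measurable hA, h A hA]⟩
  obtain ⟨μ, hμ, hunique⟩ := existsUnique_map_eq_of_nontrivial_fibers_null hπcont hπsurj hsingle
  have hinv : ∀ g, (μ.map (φ g)).map π = ν := fun g => by
    rw [map_map hπcont.measurable (hφcont g).measurable, show π ∘ φ g = ψ g ∘ π from
      funext (hπequiv g), ← map_map (hψcont g).measurable hπcont.measurable, hμ, hνinv]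
  refine ⟨μ, ⟨⟨?_⟩, fun g => hunique _ (hinv g), (lift_iff μ).1 hμ⟩,
    fun μ' ⟨_, _, hμ'⟩ => hunique μ' ((lift_iff μ').2 hμ')⟩
  simpa using (lift_iff μ).1 hμ univ MeasurableSet.univ

/-- Let `(X, φ, G)` and `(Y, ψ, G)` be topological dynamical systems given by
continuous actions of a countable group `G` on compact metric spaces, let `π : X → Y` be a
factor map, let `ν` be an invariant Borel probability measure of `(Y, ψ, G)`, and let `μ` be
the invariant probability measure on the sigma-algebra `π⁻¹ β(Y)` defined by
`μ(π⁻¹ A) = ν(A)`. If `ν({y : |π⁻¹{y}| > 1}) = 0`, then `μ` extends to a unique invariant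
Borel probability measure on `X` — i.e. there is a unique invariant Borel probability measure
`μ'` on `X` with `μ'(π⁻¹ A) = ν(A)` for every Borel set `A ⊆ Y`. -/
theorem statement6 {G : Type*} [Group G] [Countable G]
    {X : Type*} [MetricSpace X] [CompactSpace X] [MeasurableSpace X] [BorelSpace X]
    {Y : Type*} [MetricSpace Y] [CompactSpace Y] [MeasurableSpace Y] [BorelSpace Y]
    (φ : G → X → X) (hφcont : ∀ g, Continuous (φ g))
    (hφone : ∀ x, φ 1 x = x) (hφmul : ∀ g h x, φ (g * h) x = φ g (φ h x))
    (ψ : G → Y → Y) (hψcont : ∀ g, Continuous (ψ g))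
    (hψone : ∀ y, ψ 1 y = y) (hψmul : ∀ g h y, ψ (g * h) y = ψ g (ψ h y))
    (π : X → Y) (hπcont : Continuous π) (hπsurj : Function.Surjective π)
    (hπequiv : ∀ (g : G) (x : X), π (φ g x) = ψ g (π x))
    (ν : Measure Y) [IsProbabilityMeasure ν] (hνinv : ∀ g : G, Measure.map (ψ g) ν = ν)
    (hsingle : ν {y : Y | (π ⁻¹' {y}).Nontrivial} = 0) :
    ∃! μ' : Measure X, IsProbabilityMeasure μ' ∧
      (∀ g : G, Measure.map (φ g) μ' = μ') ∧
      ∀ A : Set Y, MeasurableSet A → μ' (π ⁻¹' A) = ν A :=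
  statement6_general φ hφcont ψ hψcont π hπcont hπsurj hπequiv ν hνinv hsingle
end

section
/- With η the constructed Toeplitz array and d_n=|D_n∩Per(η,Γ_n)|/|D_n|, one has 1−d_{n+1}=(1−1/|D_1|)·∏_{j=1}^{n}(1−|D_j|/|D_{j+1}|) for every n∈ℕ. -/
open Pointwise MeasureTheory Filter Topology

/-- The (left) shift action of `G` on `G → A`: `(σ^g x)(h) = x(g⁻¹ h)`. -/
def shift {G A : Type*} [Group G] (g : G) (x : G → A) : G → A := fun h => x (g⁻¹ * h)

/-- `Per(x, Γ, α) = {g ∈ G : x(γ g) = α for all γ ∈ Γ}`. -/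
def Per {G A : Type*} [Group G] (x : G → A) (Γ : Subgroup G) (α : A) : Set G :=
  {g : G | ∀ γ ∈ Γ, x (γ * g) = α}

/-- `Per(x, Γ) = ⋃_α Per(x, Γ, α)`. -/
def PerAll {G A : Type*} [Group G] (x : G → A) (Γ : Subgroup G) : Set G :=
  ⋃ α : A, Per x Γ α

/-- `x` is a Toeplitz array if every `g ∈ G` is periodic for some finite index subgroup. -/
def IsToeplitz {G A : Type*} [Group G] (x : G → A) : Prop :=
  ∀ g : G, ∃ Γ : Subgroup G, Γ.FiniteIndex ∧ g ∈ PerAll x Γ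

/-- The symbol `α_{m+1} ∈ Σ = {1, …, r}` of the construction: the symbol `j ∈ {1, …, r}` with
`j ≡ m+1 (mod r)`, rendered in `Fin r` (the symbol `i ∈ {1, …, r}` corresponds to `i-1`). -/
def sym {r : ℕ} (hr : 1 < r) (m : ℕ) : Fin r := ⟨m % r, Nat.mod_lt m (by omega)⟩

/-!
By normality `J i * Γ (i + 1) = Γ (i + 1) * J i`, a union of cosets `Γ (i + 1) * h` on which `η`
is constant. Hence every point of `D (n + 1)` outside `J (n + 1)` is `Γ (n + 1)`-periodic, while no
point of `J (n + 1)` is, so `1 - d (n + 1) = |J (n + 1)| / |D (n + 1)|`. Since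
`D (m + 1) = (D (m + 1) ∩ Γ m) * D m`, the set `J (m + 1)` consists of the `Γ m`-translates of
`J m` inside `D (m + 1)` other than `J m` itself, so `|J (m + 1)| = (|D (m + 1)| / |D m| - 1) |J m|`
and the ratios `|J m| / |D m|` multiply out to the product.
-/

section

variable {G : Type*} [Group G]

theorem Subgroup.mul_mem_coe_mul_iff {H : Subgroup G} {S : Set G} {γ x : G} (hγ : γ ∈ H) :
    γ * x ∈ (H : Set G) * S ↔ x ∈ (H : Set G) * S := by
  constructor
  · intro hx
    obtain ⟨h, hh, s, hs, he⟩ := Set.mem_mul.mp hx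
    exact Set.mem_mul.mpr
      ⟨γ⁻¹ * h, H.mul_mem (H.inv_mem hγ) hh, s, hs, by rw [mul_assoc, he, inv_mul_cancel_left]⟩
  · intro hx
    obtain ⟨h, hh, s, hs, rfl⟩ := Set.mem_mul.mp hx
    exact Set.mem_mul.mpr ⟨γ * h, H.mul_mem hγ hh, s, hs, mul_assoc _ _ _⟩

namespace IsFundDomain

variable {H : Subgroup G} {E F : Finset G}

theorem eq_of_mul_eq (hE : IsFundDomain H E) {γ γ' u u' : G} (hγ : γ ∈ H) (hγ' : γ' ∈ H)
    (hu : u ∈ E) (hu' : u' ∈ E) (h : γ * u = γ' * u') : γ = γ' ∧ u = u' := by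
  obtain ⟨p, -, hp⟩ := hE (γ * u)
  exact Prod.ext_iff.mp ((hp (γ, u) ⟨hγ, hu, rfl⟩).trans (hp (γ', u') ⟨hγ', hu', h⟩).symm)

theorem nonempty (hE : IsFundDomain H E) : E.Nonempty :=
  let ⟨p, ⟨_, hp, _⟩, _⟩ := hE 1
  ⟨p.2, hp⟩

theorem coe_mul_eq_univ (hE : IsFundDomain H E) : (H : Set G) * (E : Set G) = Set.univ :=
  Set.eq_univ_of_forall fun g =>
    let ⟨p, ⟨hγ, hu, he⟩, _⟩ := hE g
    ⟨p.1, hγ, p.2, hu, he.symm⟩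

theorem exists_mem_of_lt (hE : IsFundDomain H E) {H' : Subgroup G} (hlt : H < H') :
    ∃ u ∈ E, u ∈ H' ∧ u ∉ H := by
  obtain ⟨g, hgH', hgH⟩ := SetLike.exists_of_lt hlt
  obtain ⟨⟨γ, u⟩, ⟨hγ, hu, rfl⟩, -⟩ := hE g
  exact ⟨u, hu, (H'.mul_mem_cancel_left (hlt.le hγ)).mp hgH', fun huH => hgH (H.mul_mem hγ huH)⟩

theorem mul_mem_coe_mul_iff (hE : IsFundDomain H E) {S : Set G} (hS : S ⊆ E) {γ u : G}
    (hγ : γ ∈ H) (hu : u ∈ E) : γ * u ∈ (H : Set G) * S ↔ u ∈ S := by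
  refine ⟨?_, fun hu => Set.mul_mem_mul hγ hu⟩
  intro h
  obtain ⟨γ', hγ', s, hs, he⟩ := Set.mem_mul.mp h
  rw [(hE.eq_of_mul_eq hγ hγ' hu (hS hs) he.symm).2]
  exact hs

theorem mem_coe_mul_iff (hE : IsFundDomain H E) {S : Set G} (hS : S ⊆ E) {x : G}
    (hx : x ∈ E) : x ∈ (H : Set G) * S ↔ x ∈ S := by
  simpa only [one_mul] using hE.mul_mem_coe_mul_iff hS H.one_mem hx

theorem mul_mem_iff_of_decomp (hE : IsFundDomain H E)
    (hF : (F : Set G) = ⋃ v ∈ (F : Set G) ∩ H, v • (E : Set G)) {γ u : G} (hγ : γ ∈ H)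
    (hu : u ∈ E) : γ * u ∈ F ↔ γ ∈ F := by
  refine ⟨fun h => ?_, fun h => ?_⟩
  · obtain ⟨v, ⟨hvF, hvH⟩, u', hu', he⟩ := Set.mem_iUnion₂.mp (hF.le (Finset.mem_coe.mpr h))
    rw [(hE.eq_of_mul_eq hγ hvH hu hu' he.symm).1]
    exact hvF
  · exact Finset.mem_coe.mp
      (hF.ge (Set.mem_iUnion₂.mpr ⟨γ, ⟨h, hγ⟩, Set.smul_mem_smul_set hu⟩))

theorem ncard_inter_coe_mul (hE : IsFundDomain H E)
    (hF : (F : Set G) = ⋃ v ∈ (F : Set G) ∩ H, v • (E : Set G)) {S : Set G} (hS : S ⊆ E) :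
    ((F : Set G) ∩ ((H : Set G) * S)).ncard = ((F : Set G) ∩ H).ncard * S.ncard := by
  have himage : (F : Set G) ∩ ((H : Set G) * S)
      = (fun p : G × G => p.1 * p.2) '' (((F : Set G) ∩ H) ×ˢ S) := by
    ext x
    constructor
    · rintro ⟨hxF, hx⟩
      obtain ⟨γ, hγ, s, hs, rfl⟩ := Set.mem_mul.mp hx
      exact ⟨(γ, s), ⟨⟨(hE.mul_mem_iff_of_decomp hF hγ (hS hs)).mp hxF, hγ⟩, hs⟩, rfl⟩
    · rintro ⟨⟨v, s⟩, ⟨⟨hvF, hvH⟩, hs⟩, rfl⟩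
      exact ⟨(hE.mul_mem_iff_of_decomp hF hvH (hS hs)).mpr hvF, Set.mul_mem_mul hvH hs⟩
  rw [himage, Set.InjOn.ncard_image, Set.ncard_prod]
  rintro ⟨v, s⟩ ⟨⟨-, hv⟩, hs⟩ ⟨v', s'⟩ ⟨⟨-, hv'⟩, hs'⟩ he
  exact Prod.ext_iff.mpr (hE.eq_of_mul_eq hv hv' (hS hs) (hS hs') he)

end IsFundDomain

structure IsNestedFundDomains (Γ : ℕ → Subgroup G) (D : ℕ → Finset G) : Prop where
  antitone : Antitone Γ
  isFundDomain : ∀ n, IsFundDomain (Γ n) (D n)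
  subset_succ : ∀ n, D n ⊆ D (n + 1)
  decomp : ∀ n,
    (D (n + 1) : Set G) = ⋃ v ∈ (D (n + 1) : Set G) ∩ (Γ n : Set G), v • (D n : Set G)

namespace IsNestedFundDomains

variable {Γ : ℕ → Subgroup G} {D : ℕ → Finset G} {J : ℕ → Set G}

theorem J_subset (hJ : ∀ m, J m = (D m : Set G) \ ⋃ i < m, (Γ (i + 1) : Set G) * J i) (m : ℕ) :
    J m ⊆ D m :=
  hJ m ▸ Set.sdiff_subset

theorem card_succ (hΓD : IsNestedFundDomains Γ D) (m : ℕ) :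
    (D (m + 1)).card = ((D (m + 1) : Set G) ∩ Γ m).ncard * (D m).card := by
  have h := (hΓD.isFundDomain m).ncard_inter_coe_mul (hΓD.decomp m) subset_rfl
  rwa [(hΓD.isFundDomain m).coe_mul_eq_univ, Set.inter_univ, Set.ncard_coe_finset,
    Set.ncard_coe_finset] at h

theorem mul_mem_iUnion_iff (hΓD : IsNestedFundDomains Γ D) {m : ℕ} {v : G} (hv : v ∈ Γ m)
    (x : G) :
    v * x ∈ ⋃ i < m, (Γ (i + 1) : Set G) * J i ↔ x ∈ ⋃ i < m, (Γ (i + 1) : Set G) * J i := by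
  simp only [Set.mem_iUnion₂]
  exact exists₂_congr fun i hi =>
    Subgroup.mul_mem_coe_mul_iff (hΓD.antitone (Nat.succ_le_of_lt hi) hv)

theorem J_succ_eq (hΓD : IsNestedFundDomains Γ D)
    (hJ : ∀ m, J m = (D m : Set G) \ ⋃ i < m, (Γ (i + 1) : Set G) * J i) (m : ℕ) :
    J (m + 1) = ((D (m + 1) : Set G) ∩ ((Γ m : Set G) * J m)) \ J m := by
  have hJD := J_subset hJ m
  ext x
  rw [hJ (m + 1), Set.biUnion_lt_succ]
  simp only [Set.mem_sdiff, Set.mem_union, Set.mem_inter_iff, not_or]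
  by_cases hx : x ∈ D (m + 1)
  · have hnew : x ∈ (Γ (m + 1) : Set G) * J m ↔ x ∈ J m :=
      (hΓD.isFundDomain (m + 1)).mem_coe_mul_iff (hJD.trans (hΓD.subset_succ m)) hx
    have hold : x ∉ ⋃ i < m, (Γ (i + 1) : Set G) * J i ↔ x ∈ (Γ m : Set G) * J m := by
      obtain ⟨v, ⟨-, hvΓ⟩, u, hu, hvu : v * u = x⟩ := Set.mem_iUnion₂.mp ((hΓD.decomp m).le hx)
      subst hvu
      rw [hΓD.mul_mem_iUnion_iff hvΓ, (hΓD.isFundDomain m).mul_mem_coe_mul_iff hJD hvΓ hu,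
        hJ m, Set.mem_sdiff]
      exact ⟨fun h => ⟨hu, h⟩, And.right⟩
    rw [hnew, hold]
    tauto
  · simp [hx]

theorem ncard_J_succ_add (hΓD : IsNestedFundDomains Γ D)
    (hJ : ∀ m, J m = (D m : Set G) \ ⋃ i < m, (Γ (i + 1) : Set G) * J i) (m : ℕ) :
    (J (m + 1)).ncard + (J m).ncard = ((D (m + 1) : Set G) ∩ Γ m).ncard * (J m).ncard := by
  have hJD := J_subset hJ m
  have hsub : J m ⊆ (D (m + 1) : Set G) ∩ ((Γ m : Set G) * J m) := fun x hx =>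
    ⟨hΓD.subset_succ m (hJD hx), Set.subset_mul_right _ (Subgroup.one_mem _) hx⟩
  rw [hΓD.J_succ_eq hJ m,
    Set.ncard_sdiff_add_ncard_of_subset hsub
      ((D (m + 1)).finite_toSet.subset Set.inter_subset_left),
    (hΓD.isFundDomain m).ncard_inter_coe_mul (hΓD.decomp m) hJD]

/-- A point `x ∈ J (n + 1)` is not periodic: for `v ∈ D (n + 2)` in `Γ (n + 1) \ Γ (n + 2)`,
`v * x` lies in `J (n + 2)`, where `η` takes the different value `a (n + 2)`. -/
theorem inter_perAll_eq {A : Type*} (hΓD : IsNestedFundDomains Γ D)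
    (hJ : ∀ m, J m = (D m : Set G) \ ⋃ i < m, (Γ (i + 1) : Set G) * J i)
    {η : G → A} {a : ℕ → A} (hη : ∀ m, ∀ x ∈ (Γ (m + 1) : Set G) * J m, η x = a m) {n : ℕ}
    (ha : a (n + 1) ≠ a (n + 2)) (hlt : Γ (n + 2) < Γ (n + 1)) :
    (D (n + 1) : Set G) ∩ PerAll η (Γ (n + 1)) = (D (n + 1) : Set G) \ J (n + 1) := by
  ext x
  simp only [Set.mem_inter_iff, Set.mem_sdiff]
  refine and_congr_right fun hx => ⟨fun hper hxJ => ?_, fun hxJ => ?_⟩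
  · obtain ⟨α, hα⟩ := Set.mem_iUnion.mp hper
    obtain ⟨v, hvD, hvΓ, hvΓ'⟩ := (hΓD.isFundDomain (n + 2)).exists_mem_of_lt hlt
    have hvx : v * x ∈ J (n + 2) := by
      rw [hΓD.J_succ_eq hJ]
      refine ⟨⟨((hΓD.isFundDomain (n + 1)).mul_mem_iff_of_decomp (hΓD.decomp (n + 1)) hvΓ hx).mpr
        hvD, Set.mul_mem_mul hvΓ hxJ⟩, fun hvxJ => hvΓ' ?_⟩
      obtain ⟨rfl, -⟩ := (hΓD.isFundDomain (n + 1)).eq_of_mul_eq hvΓ (Subgroup.one_mem _) hx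
        (J_subset hJ _ hvxJ) (one_mul _).symm
      exact Subgroup.one_mem _
    have hηx : η x = a (n + 1) := hη (n + 1) x (Set.subset_mul_right _ (Subgroup.one_mem _) hxJ)
    have hηvx : η (v * x) = a (n + 2) :=
      hη (n + 2) _ (Set.subset_mul_right _ (Subgroup.one_mem _) hvx)
    have hperiodic : η (v * x) = η x := by
      rw [hα v hvΓ, ← hα 1 (Subgroup.one_mem _), one_mul]
    exact ha (hηx.symm.trans (hperiodic.symm.trans hηvx))
  · have hxK : x ∈ ⋃ i < n + 1, (Γ (i + 1) : Set G) * J i := by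
      by_contra h
      rw [hJ (n + 1)] at hxJ
      exact hxJ ⟨hx, h⟩
    obtain ⟨i, hi, hxK⟩ := Set.mem_iUnion₂.mp hxK
    exact Set.mem_iUnion.mpr ⟨a i, fun γ hγ => hη i _
      ((Subgroup.mul_mem_coe_mul_iff (hΓD.antitone (Nat.succ_le_of_lt hi) hγ)).mpr hxK)⟩

end IsNestedFundDomains

theorem sym_ne_sym_succ {r : ℕ} (hr : 1 < r) (m : ℕ) : sym hr m ≠ sym hr (m + 1) := by
  intro h
  have hdvd := (Nat.modEq_iff_dvd' (Nat.le_add_right m 1)).mp (congrArg Fin.val h)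
  rw [Nat.add_sub_cancel_left, Nat.dvd_one] at hdvd
  omega

theorem div_succ_eq_mul_prod_Icc {K : Type*} [Field K] {c N t : ℕ → K} (hN0 : ∀ m, N m ≠ 0)
    (hN : ∀ m, N (m + 1) = t m * N m) (hc : ∀ m, c (m + 1) + c m = t m * c m) (h0 : c 0 = N 0)
    (n : ℕ) :
    c (n + 1) / N (n + 1) = (1 - N 0 / N 1) * ∏ j ∈ Finset.Icc 1 n, (1 - N j / N (j + 1)) := by
  induction n with
  | zero =>
    have hc1 : c 1 = N 1 - N 0 := by rw [hN 0, eq_sub_of_add_eq (hc 0), h0]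
    simp [hc1, sub_div, div_self (hN0 1)]
  | succ k ih =>
    rw [Finset.prod_Icc_succ_top (by omega), ← mul_assoc, ← ih]
    have ht : t (k + 1) ≠ 0 := fun h => hN0 (k + 2) (by rw [hN, h, zero_mul])
    have hNk := hN0 (k + 1)
    rw [hN (k + 1), eq_sub_of_add_eq (hc (k + 1))]
    field_simp

end

theorem statement12_general {G : Type*} [Group G]
    {r : ℕ} (hr : 1 < r)
    -- the sequence of subgroups (with the convention `Γ 0 = G`, the data of the paper being
    -- `Γ 1 > Γ 2 > ⋯`)
    (Γ : ℕ → Subgroup G) (hanti : StrictAnti Γ)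
    (hnormal : ∀ n, (Γ n).Normal)
    -- the fundamental domains
    (D : ℕ → Finset G) (hD0 : D 0 = {1}) (hfund : ∀ n, IsFundDomain (Γ n) (D n))
    (hDmono : ∀ n, D n ⊆ D (n + 1))
    (hdecomp : ∀ i j, i < j →
      (D j : Set G) = ⋃ v ∈ (D j : Set G) ∩ (Γ i : Set G), v • (D i : Set G))
    -- the sets `J m`
    (J : ℕ → Set G) (hJ0 : J 0 = {1})
    (hJ : ∀ m, 1 ≤ m → J m = (D m : Set G) \ ⋃ i < m, J i * ((Γ (i + 1) : Subgroup G) : Set G))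
    -- the Toeplitz array `η`
    (η : G → Fin r)
    (hηdef : ∀ (m : ℕ), ∀ h ∈ J m, ∀ g ∈ Γ (m + 1), η (h * g) = sym hr m)
    -- the densities `d n = |D n ∩ Per(η, Γ n)| / |D n|`
    (d : ℕ → ℝ) (hd : ∀ n, d n = ((D n : Set G) ∩ PerAll η (Γ n)).ncard / (D n).card) :
    -- `1 - d (n+1) = (1 - 1/|D 1|) ∏_{j=1}^{n} (1 - |D j| / |D (j+1)|)`
    ∀ n : ℕ, 1 - d (n + 1) =
      (1 - 1 / (D 1).card) *
        ∏ j ∈ Finset.Icc 1 n, (1 - ((D j).card : ℝ) / (D (j + 1)).card) := by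
  have hΓD : IsNestedFundDomains Γ D :=
    ⟨hanti.antitone, hfund, hDmono, fun n => hdecomp n (n + 1) n.lt_succ_self⟩
  have hcomm (i : ℕ) : J i * (Γ (i + 1) : Set G) = (Γ (i + 1) : Set G) * J i :=
    Subgroup.set_mul_normal_comm (hN := hnormal (i + 1)) _ _
  have hJ' (m : ℕ) : J m = (D m : Set G) \ ⋃ i < m, (Γ (i + 1) : Set G) * J i := by
    rcases m with _ | m
    · simp [hJ0, hD0]
    · simp_rw [← hcomm]
      exact hJ _ m.succ_pos
  have hη (m : ℕ) : ∀ x ∈ (Γ (m + 1) : Set G) * J m, η x = sym hr m := by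
    intro x hx
    rw [← hcomm] at hx
    obtain ⟨h, hh, g, hg, rfl⟩ := Set.mem_mul.mp hx
    exact hηdef m h hh g hg
  have hN0 (m : ℕ) : ((D m).card : ℝ) ≠ 0 := by
    exact_mod_cast (hfund m).nonempty.card_pos.ne'
  intro n
  have hcard := Set.ncard_sdiff_add_ncard_of_subset (IsNestedFundDomains.J_subset hJ' (n + 1))
  rw [Set.ncard_coe_finset, ← hΓD.inter_perAll_eq hJ' hη (sym_ne_sym_succ hr (n + 1))
    (hanti (n + 1).lt_succ_self)] at hcard
  have hratio := div_succ_eq_mul_prod_Icc (c := fun m => ((J m).ncard : ℝ))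
    (N := fun m => ((D m).card : ℝ)) (t := fun m => (((D (m + 1) : Set G) ∩ Γ m).ncard : ℝ))
    hN0 (fun m => by exact_mod_cast hΓD.card_succ m)
    (fun m => by exact_mod_cast hΓD.ncard_J_succ_add hJ' m) (by simp [hJ0, hD0]) n
  simp only [hD0, Finset.card_singleton, Nat.cast_one] at hratio
  rw [hd, ← hratio, eq_div_iff (hN0 _), sub_mul, one_mul, div_mul_cancel₀ _ (hN0 _), ← hcard]
  push_cast
  ring

theorem statement12 {G : Type*} [Group G] [Countable G]
    {r : ℕ} (hr : 1 < r)
    -- the sequence of subgroups (with the convention `Γ 0 = G`, the data of the paper being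
    -- `Γ 1 > Γ 2 > ⋯`)
    (Γ : ℕ → Subgroup G) (hΓ0 : Γ 0 = ⊤) (hanti : StrictAnti Γ)
    (hnormal : ∀ n, (Γ n).Normal) (hfi : ∀ n, (Γ n).FiniteIndex)
    (hint : (⨅ n, Γ n) = ⊥) (hidx : ∀ n, 3 ≤ (Γ (n + 1)).relIndex (Γ n))
    -- the fundamental domains
    (D : ℕ → Finset G) (hD0 : D 0 = {1}) (hfund : ∀ n, IsFundDomain (Γ n) (D n))
    (hone : ∀ n, (1 : G) ∈ D n) (hDmono : ∀ n, D n ⊆ D (n + 1))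
    (hcoverD : ∀ g : G, ∃ n, g ∈ D n)
    (hdecomp : ∀ i j, i < j →
      (D j : Set G) = ⋃ v ∈ (D j : Set G) ∩ (Γ i : Set G), v • (D i : Set G))
    -- the sets `J m`
    (J : ℕ → Set G) (hJ0 : J 0 = {1})
    (hJ : ∀ m, 1 ≤ m → J m = (D m : Set G) \ ⋃ i < m, J i * ((Γ (i + 1) : Subgroup G) : Set G))
    -- the Toeplitz array `η`
    (η : G → Fin r)
    (hηdef : ∀ (m : ℕ), ∀ h ∈ J m, ∀ g ∈ Γ (m + 1), η (h * g) = sym hr m)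
    -- the densities `d n = |D n ∩ Per(η, Γ n)| / |D n|`
    (d : ℕ → ℝ) (hd : ∀ n, d n = ((D n : Set G) ∩ PerAll η (Γ n)).ncard / (D n).card) :
    -- `1 - d (n+1) = (1 - 1/|D 1|) ∏_{j=1}^{n} (1 - |D j| / |D (j+1)|)`
    ∀ n : ℕ, 1 - d (n + 1) =
      (1 - 1 / (D 1).card) *
        ∏ j ∈ Finset.Icc 1 n, (1 - ((D j).card : ℝ) / (D (j + 1)).card) :=
  statement12_general hr Γ hanti hnormal D hD0 hfund hDmono hdecomp J hJ0 hJ η hηdef d hd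
end

section
/- Let n≥1. For every m≥n+2 the set (Γ_{n+1}∩D_m)∖(D_{n+1}Γ_{n+2} ∪ ⋯ ∪ D_{m-1}Γ_m) is nonempty, and moreover |(Γ_{n+1}∩D_m)∖(D_{n+1}Γ_{n+2} ∪ ⋯ ∪ D_{m-1}Γ_m)| ≥ (|D_m|/|D_{n+1}|)·∏_{l=1}^{m-n-1}(1−|D_{n+l}|/|D_{n+l+1}|). Furthermore, if γ belongs to this set then γD_{n+1} ⊆ D_m∖(D_{n+1}Γ_{n+2} ∪ ⋯ ∪ D_{m-1}Γ_m). -/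
/-!
Write `S_m` for the set in question and `k_s = |D_{s+1} ∩ Γ_s| = [Γ_s : Γ_{s+1}]`, so that
`|D_{s+1}| = k_s |D_s|`. Since `D_{m+1} = (D_{m+1} ∩ Γ_m) D_m` and `D_m` is a fundamental domain
of `Γ_m`, every element of `S_{m+1}` factors uniquely as `w u` with `w ∈ (D_{m+1} ∩ Γ_m) ∖ Γ_{m+1}`
and `u ∈ S_m`: the factor `w` must avoid `Γ_{m+1}` because `D_m Γ_{m+1} = Γ_{m+1} D_m`, and
left multiplication by `Γ_m` preserves each `D_s Γ_{s+1}` with `s < m`. As `S_{n+1} = {1}`, this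
gives `|S_m| = ∏ (k_s - 1)`, which is exactly the claimed lower bound, and `S_m ≠ ∅` because the
`Γ_s` decrease strictly. For the translates, if `γ u ∈ Γ_{s+1} D_s` with `u ∈ D_{n+1}`, expanding
`D_s = (D_s ∩ Γ_{n+1}) D_{n+1}` and comparing factorizations modulo `Γ_{n+1}` gives
`γ ∈ Γ_{s+1} D_s`.
-/

open Pointwise MeasureTheory Filter Topology

namespace IsFundDomain

variable {G : Type*} [Group G] {Γ N : Subgroup G} {D : Finset G}

lemma exists_mul_eq (hD : IsFundDomain Γ D) (g : G) : ∃ γ ∈ Γ, ∃ u ∈ D, γ * u = g := by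
  obtain ⟨⟨γ, u⟩, ⟨hγ, hu, rfl⟩, -⟩ := hD g
  exact ⟨γ, hγ, u, hu, rfl⟩

lemma eq_of_mul_eq_s13 (hD : IsFundDomain Γ D) {γ₁ γ₂ u₁ u₂ : G} (hγ₁ : γ₁ ∈ Γ) (hγ₂ : γ₂ ∈ Γ)
    (hu₁ : u₁ ∈ D) (hu₂ : u₂ ∈ D) (h : γ₁ * u₁ = γ₂ * u₂) : γ₁ = γ₂ ∧ u₁ = u₂ := by
  obtain ⟨p, -, hp⟩ := hD (γ₁ * u₁)
  exact Prod.ext_iff.1 <| (hp (γ₁, u₁) ⟨hγ₁, hu₁, rfl⟩).trans (hp (γ₂, u₂) ⟨hγ₂, hu₂, h⟩).symm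

lemma eq_one_of_mem (hD : IsFundDomain Γ D) (h1 : (1 : G) ∈ D) {x : G} (hxΓ : x ∈ Γ)
    (hxD : x ∈ D) : x = 1 :=
  (hD.eq_of_mul_eq_s13 hxΓ Γ.one_mem h1 hxD (by rw [mul_one, one_mul])).1

lemma ncard_sdiff_eq_ncard_sub_one (hD : IsFundDomain Γ D) {A : Set G} (hAD : A ⊆ D)
    (h1 : (1 : G) ∈ A) : (A \ Γ).ncard = A.ncard - 1 := by
  have hA : A \ Γ = A \ {1} := by
    ext x
    simp only [Set.mem_sdiff, SetLike.mem_coe, Set.mem_singleton_iff]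
    exact and_congr_right fun hx =>
      not_congr ⟨fun hxΓ => hD.eq_one_of_mem (hAD h1) hxΓ (hAD hx), fun h => h ▸ Γ.one_mem⟩
  rw [hA, Set.ncard_sdiff_singleton_of_mem h1]

lemma ncard_mul (hD : IsFundDomain Γ D) {A B : Set G} (hA : A ⊆ Γ) (hB : B ⊆ D) :
    (A * B).ncard = A.ncard * B.ncard := by
  have hinj : Set.InjOn (fun p : G × G => p.1 * p.2) (A ×ˢ B) := fun p hp q hq h =>
    Prod.ext_iff.2 (hD.eq_of_mul_eq_s13 (hA hp.1) (hA hq.1) (hB hp.2) (hB hq.2) h)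
  rw [← Set.image_mul_prod, hinj.ncard_image, Set.ncard_prod]

lemma card_eq_ncard_inter_mul_card (hD : IsFundDomain Γ D) {E : Finset G}
    (hE : (E : Set G) = ((E : Set G) ∩ Γ) * D) : E.card = ((E : Set G) ∩ Γ).ncard * D.card := by
  calc E.card = (((E : Set G) ∩ Γ) * D).ncard := by rw [← hE, Set.ncard_coe_finset]
    _ = ((E : Set G) ∩ Γ).ncard * D.card := by
      rw [hD.ncard_mul Set.inter_subset_right subset_rfl, Set.ncard_coe_finset]

lemma exists_mem_sdiff_of_lt (hD : IsFundDomain N D) (hN : N < Γ) : ∃ u ∈ D, u ∈ Γ ∧ u ∉ N := by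
  obtain ⟨γ, hγ, hγN⟩ := SetLike.exists_of_lt hN
  obtain ⟨δ, hδ, u, hu, rfl⟩ := hD.exists_mul_eq γ
  exact ⟨u, hu, (Γ.mul_mem_cancel_left (hN.le hδ)).1 hγ, fun huN => hγN (N.mul_mem hδ huN)⟩

lemma mem_subgroup_mul_of_mul_mem (hD : IsFundDomain Γ D) (hN : N ≤ Γ) {E : Set G}
    (hE : E ⊆ (E ∩ Γ) * D) {γ u : G} (hγ : γ ∈ Γ) (hu : u ∈ D)
    (h : γ * u ∈ (N : Set G) * E) : γ ∈ (N : Set G) * E := by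
  obtain ⟨δ, hδ, v, hv, hδv⟩ := Set.mem_mul.1 h
  obtain ⟨c, ⟨hcE, hcΓ⟩, u', hu', rfl⟩ := Set.mem_mul.1 (hE hv)
  have := hD.eq_of_mul_eq_s13 hγ (Γ.mul_mem (hN hδ) hcΓ) hu hu' (by rw [← hδv, mul_assoc])
  exact ⟨δ, hδ, c, hcE, this.1.symm⟩

end IsFundDomain

lemma mul_mem_subgroup_mul_iff {G : Type*} [Group G] {N : Subgroup G} {A : Set G} {w x : G}
    (hw : w ∈ N) : w * x ∈ (N : Set G) * A ↔ x ∈ (N : Set G) * A := by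
  constructor
  · intro hwx
    obtain ⟨δ, hδ, v, hv, h⟩ := Set.mem_mul.1 hwx
    exact Set.mem_mul.2
      ⟨w⁻¹ * δ, N.mul_mem (N.inv_mem hw) hδ, v, hv, by rw [mul_assoc, h, inv_mul_cancel_left]⟩
  · rintro ⟨δ, hδ, v, hv, rfl⟩
    exact Set.mem_mul.2 ⟨w * δ, N.mul_mem hw hδ, v, hv, mul_assoc _ _ _⟩

section Tower

variable {G : Type*} [Group G] {Γ : ℕ → Subgroup G} {D : ℕ → Finset G} {n m : ℕ}

def coveredSet (Γ : ℕ → Subgroup G) (D : ℕ → Finset G) (n m : ℕ) : Set G :=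
  ⋃ s ∈ Finset.Icc (n + 1) (m - 1), (D s : Set G) * (Γ (s + 1) : Set G)

def uncoveredSet (Γ : ℕ → Subgroup G) (D : ℕ → Finset G) (n m : ℕ) : Set G :=
  ((Γ (n + 1) : Set G) ∩ (D m : Set G)) \ coveredSet Γ D n m

lemma coveredSet_self : coveredSet Γ D n (n + 1) = ∅ := by
  simp [coveredSet]

lemma mem_coveredSet_iff (hnormal : ∀ s, (Γ s).Normal) {x : G} :
    x ∈ coveredSet Γ D n m ↔ ∃ s, n + 1 ≤ s ∧ s < m ∧ x ∈ (Γ (s + 1) : Set G) * D s := by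
  simp only [coveredSet, Set.mem_iUnion, Finset.mem_Icc, exists_prop,
    Subgroup.set_mul_normal_comm]
  exact exists_congr fun s => ⟨fun ⟨⟨h₁, h₂⟩, hx⟩ => ⟨h₁, by omega, hx⟩,
    fun ⟨h₁, h₂, hx⟩ => ⟨⟨h₁, by omega⟩, hx⟩⟩

lemma mem_coveredSet_succ_iff (hnormal : ∀ s, (Γ s).Normal) (hm : n + 1 ≤ m) {x : G} :
    x ∈ coveredSet Γ D n (m + 1) ↔
      x ∈ coveredSet Γ D n m ∨ x ∈ (Γ (m + 1) : Set G) * D m := by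
  simp only [mem_coveredSet_iff hnormal]
  constructor
  · rintro ⟨s, h₁, h₂, hx⟩
    rcases Nat.lt_succ_iff_lt_or_eq.1 h₂ with h₂ | rfl
    exacts [Or.inl ⟨s, h₁, h₂, hx⟩, Or.inr hx]
  · rintro (⟨s, h₁, h₂, hx⟩ | hx)
    exacts [⟨s, h₁, h₂.trans (Nat.lt_succ_self m), hx⟩, ⟨m, hm, Nat.lt_succ_self m, hx⟩]

lemma mul_mem_coveredSet_iff (hanti : Antitone Γ) (hnormal : ∀ s, (Γ s).Normal) {w x : G}
    (hw : w ∈ Γ m) : w * x ∈ coveredSet Γ D n m ↔ x ∈ coveredSet Γ D n m := by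
  simp only [mem_coveredSet_iff hnormal]
  exact exists_congr fun s => and_congr_right fun _ => and_congr_right fun hs =>
    mul_mem_subgroup_mul_iff (hanti hs hw)

lemma subset_inter_mul_of_le (hone : ∀ s, (1 : G) ∈ D s)
    (hdecomp : ∀ i j, i < j → (D j : Set G) = ((D j : Set G) ∩ Γ i) * D i) {i j : ℕ}
    (hij : i ≤ j) : (D j : Set G) ⊆ ((D j : Set G) ∩ Γ i) * D i := by
  rcases hij.lt_or_eq with hij | rfl
  · exact (hdecomp i j hij).le
  · exact fun x hx => Set.mem_mul.2 ⟨1, ⟨hone i, (Γ i).one_mem⟩, x, hx, one_mul x⟩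

lemma smul_subset_sdiff_coveredSet (hanti : Antitone Γ) (hnormal : ∀ s, (Γ s).Normal)
    (hfund : IsFundDomain (Γ (n + 1)) (D (n + 1))) (hone : ∀ s, (1 : G) ∈ D s)
    (hdecomp : ∀ i j, i < j → (D j : Set G) = ((D j : Set G) ∩ Γ i) * D i) (hm : n + 1 < m)
    {γ : G} (hγ : γ ∈ uncoveredSet Γ D n m) :
    γ • (D (n + 1) : Set G) ⊆ (D m : Set G) \ coveredSet Γ D n m := by
  rintro _ ⟨u, hu, rfl⟩
  obtain ⟨⟨hγΓ, hγD⟩, hγC⟩ := hγ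
  refine ⟨?_, fun hC => hγC ?_⟩
  · rw [hdecomp _ _ hm]
    exact Set.mul_mem_mul ⟨hγD, hγΓ⟩ hu
  · rw [mem_coveredSet_iff hnormal] at hC ⊢
    obtain ⟨s, hs₁, hs₂, hγu⟩ := hC
    exact ⟨s, hs₁, hs₂, hfund.mem_subgroup_mul_of_mul_mem (hanti (by omega))
      (subset_inter_mul_of_le hone hdecomp hs₁) hγΓ hu hγu⟩

lemma uncoveredSet_self (hfund : IsFundDomain (Γ (n + 1)) (D (n + 1)))
    (hone : (1 : G) ∈ D (n + 1)) : uncoveredSet Γ D n (n + 1) = {1} := by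
  ext x
  simp only [uncoveredSet, coveredSet_self, Set.sdiff_empty, Set.mem_inter_iff, SetLike.mem_coe,
    Set.mem_singleton_iff]
  exact ⟨fun ⟨hxΓ, hxD⟩ => hfund.eq_one_of_mem hone hxΓ hxD,
    fun h => h ▸ ⟨(Γ (n + 1)).one_mem, hone⟩⟩

lemma uncoveredSet_succ (hanti : Antitone Γ) (hnormal : ∀ s, (Γ s).Normal)
    (hfund : ∀ s, IsFundDomain (Γ s) (D s))
    (hdecomp : ∀ i j, i < j → (D j : Set G) = ((D j : Set G) ∩ Γ i) * D i) (hm : n + 1 ≤ m) :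
    uncoveredSet Γ D n (m + 1) =
      (((D (m + 1) : Set G) ∩ Γ m) \ Γ (m + 1)) * uncoveredSet Γ D n m := by
  have hD := hdecomp m (m + 1) (Nat.lt_succ_self m)
  ext γ
  constructor
  · rintro ⟨⟨hγΓ, hγD⟩, hγC⟩
    rw [mem_coveredSet_succ_iff hnormal hm, not_or] at hγC
    rw [hD] at hγD
    obtain ⟨w, ⟨hwD, hwΓ⟩, u, hu, rfl⟩ := Set.mem_mul.1 hγD
    refine Set.mul_mem_mul ⟨⟨hwD, hwΓ⟩, fun hw => hγC.2 (Set.mul_mem_mul hw hu)⟩ ⟨⟨?_, hu⟩, ?_⟩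
    · exact ((Γ (n + 1)).mul_mem_cancel_left (hanti hm hwΓ)).1 hγΓ
    · exact fun huC => hγC.1 ((mul_mem_coveredSet_iff hanti hnormal hwΓ).2 huC)
  · intro hγ
    obtain ⟨w, ⟨⟨hwD, hwΓ⟩, hwΓ'⟩, u, ⟨⟨huΓ, huD⟩, huC⟩, rfl⟩ := Set.mem_mul.1 hγ
    refine ⟨⟨(Γ (n + 1)).mul_mem (hanti hm hwΓ) huΓ, hD ▸ Set.mul_mem_mul ⟨hwD, hwΓ⟩ huD⟩, ?_⟩
    rw [mem_coveredSet_succ_iff hnormal hm, mul_mem_coveredSet_iff hanti hnormal hwΓ]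
    rintro (huC' | hwu)
    · exact huC huC'
    · obtain ⟨δ, hδ, v, hv, h⟩ := Set.mem_mul.1 hwu
      have hδw := (hfund m).eq_of_mul_eq_s13 (hanti (Nat.le_succ m) hδ) hwΓ hv huD h
      exact hwΓ' (hδw.1 ▸ hδ)

lemma ncard_uncoveredSet_succ (hanti : Antitone Γ) (hnormal : ∀ s, (Γ s).Normal)
    (hfund : ∀ s, IsFundDomain (Γ s) (D s)) (hone : ∀ s, (1 : G) ∈ D s)
    (hdecomp : ∀ i j, i < j → (D j : Set G) = ((D j : Set G) ∩ Γ i) * D i) (hm : n + 1 ≤ m) :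
    (uncoveredSet Γ D n (m + 1)).ncard =
      (((D (m + 1) : Set G) ∩ Γ m).ncard - 1) * (uncoveredSet Γ D n m).ncard := by
  rw [uncoveredSet_succ hanti hnormal hfund hdecomp hm,
    (hfund m).ncard_mul (fun _ hw => hw.1.2) (fun _ hu => hu.1.2),
    (hfund (m + 1)).ncard_sdiff_eq_ncard_sub_one Set.inter_subset_left ⟨hone _, (Γ m).one_mem⟩]

lemma ncard_uncoveredSet (hanti : Antitone Γ) (hnormal : ∀ s, (Γ s).Normal)
    (hfund : ∀ s, IsFundDomain (Γ s) (D s)) (hone : ∀ s, (1 : G) ∈ D s)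
    (hdecomp : ∀ i j, i < j → (D j : Set G) = ((D j : Set G) ∩ Γ i) * D i) (n j : ℕ) :
    (uncoveredSet Γ D n (n + 1 + j)).ncard =
      ∏ l ∈ Finset.Icc 1 j, (((D (n + l + 1) : Set G) ∩ Γ (n + l)).ncard - 1) := by
  induction j with
  | zero => simp [uncoveredSet_self (hfund _) (hone _)]
  | succ j ih =>
    rw [Finset.prod_Icc_succ_top (by omega), ← ih, ← add_assoc,
      ncard_uncoveredSet_succ hanti hnormal hfund hone hdecomp (by omega), mul_comm,
      show n + (j + 1) = n + 1 + j by omega]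

lemma uncoveredSet_nonempty (hanti : StrictAnti Γ) (hnormal : ∀ s, (Γ s).Normal)
    (hfund : ∀ s, IsFundDomain (Γ s) (D s)) (hone : ∀ s, (1 : G) ∈ D s)
    (hdecomp : ∀ i j, i < j → (D j : Set G) = ((D j : Set G) ∩ Γ i) * D i) (hm : n + 1 ≤ m) :
    (uncoveredSet Γ D n m).Nonempty := by
  induction m, hm using Nat.le_induction with
  | base => rw [uncoveredSet_self (hfund _) (hone _)]; exact Set.singleton_nonempty 1
  | succ m hm ih =>
    obtain ⟨w, hwD, hwΓ, hwΓ'⟩ :=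
      (hfund (m + 1)).exists_mem_sdiff_of_lt (hanti (Nat.lt_succ_self m))
    rw [uncoveredSet_succ hanti.antitone hnormal hfund hdecomp hm]
    exact Set.Nonempty.mul ⟨w, ⟨hwD, hwΓ⟩, hwΓ'⟩ ih

lemma card_succ_div_card_sub_one (hfund : ∀ s, IsFundDomain (Γ s) (D s))
    (hone : ∀ s, (1 : G) ∈ D s)
    (hdecomp : ∀ i j, i < j → (D j : Set G) = ((D j : Set G) ∩ Γ i) * D i) (s : ℕ) :
    ((D (s + 1)).card : ℝ) / (D s).card - 1 =
      ((((D (s + 1) : Set G) ∩ Γ s).ncard - 1 : ℕ) : ℝ) := by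
  have hk : 1 ≤ ((D (s + 1) : Set G) ∩ Γ s).ncard :=
    (Set.ncard_pos ((D (s + 1)).finite_toSet.inter_of_left _)).2 ⟨1, hone _, (Γ s).one_mem⟩
  have hDs : ((D s).card : ℝ) ≠ 0 := Nat.cast_ne_zero.2 (Finset.card_ne_zero_of_mem (hone s))
  rw [(hfund s).card_eq_ncard_inter_mul_card (hdecomp s (s + 1) (Nat.lt_succ_self s)),
    Nat.cast_sub hk, Nat.cast_mul, mul_div_cancel_right₀ _ hDs, Nat.cast_one]

end Tower

lemma div_mul_prod_one_sub_div (a : ℕ → ℝ) (ha : ∀ s, a s ≠ 0) (n j : ℕ) :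
    a (n + 1 + j) / a (n + 1) * ∏ l ∈ Finset.Icc 1 j, (1 - a (n + l) / a (n + l + 1)) =
      ∏ l ∈ Finset.Icc 1 j, (a (n + l + 1) / a (n + l) - 1) := by
  induction j with
  | zero => simp [div_self (ha _)]
  | succ j ih =>
    rw [Finset.prod_Icc_succ_top (by omega), Finset.prod_Icc_succ_top (by omega), ← ih,
      show n + 1 + (j + 1) = n + (j + 1) + 1 by omega, show n + 1 + j = n + (j + 1) by omega]
    have h₁ := ha (n + 1)
    have h₂ := ha (n + (j + 1))
    have h₃ := ha (n + (j + 1) + 1)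
    field_simp

theorem statement13_general {G : Type*} [Group G]
    -- the sequence of subgroups (with the convention `Γ 0 = G`)
    (Γ : ℕ → Subgroup G) (hanti : StrictAnti Γ)
    (hnormal : ∀ n, (Γ n).Normal)
    -- the fundamental domains
    (D : ℕ → Finset G) (hfund : ∀ n, IsFundDomain (Γ n) (D n))
    (hone : ∀ n, (1 : G) ∈ D n)
    (hdecomp : ∀ i j, i < j →
      (D j : Set G) = ⋃ v ∈ (D j : Set G) ∩ (Γ i : Set G), v • (D i : Set G)) :
    ∀ n, 1 ≤ n → ∀ m, n + 2 ≤ m →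
      ∀ S : Set G,
        S = ((Γ (n + 1) : Set G) ∩ (D m : Set G)) \
              ⋃ s ∈ Finset.Icc (n + 1) (m - 1), (D s : Set G) * ((Γ (s + 1) : Subgroup G) : Set G) →
        -- the set is nonempty
        S.Nonempty ∧
        -- the cardinality lower bound
        ((D m).card : ℝ) / (D (n + 1)).card *
            ∏ l ∈ Finset.Icc 1 (m - n - 1), (1 - ((D (n + l)).card : ℝ) / (D (n + l + 1)).card)
          ≤ S.ncard ∧
        -- the translate property
        ∀ γ ∈ S, γ • (D (n + 1) : Set G) ⊆
          (D m : Set G) \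
            ⋃ s ∈ Finset.Icc (n + 1) (m - 1), (D s : Set G) * ((Γ (s + 1) : Subgroup G) : Set G) := by
  intro n _ m hm S hS
  have hdecomp_mul : ∀ i j, i < j → (D j : Set G) = ((D j : Set G) ∩ Γ i) * D i :=
    fun i j hij => (hdecomp i j hij).trans Set.iUnion_smul_left_image
  obtain ⟨j, rfl⟩ : ∃ j, m = n + 1 + j := ⟨m - n - 1, by omega⟩
  replace hS : S = uncoveredSet Γ D n (n + 1 + j) := hS
  subst hS
  refine ⟨uncoveredSet_nonempty hanti hnormal hfund hone hdecomp_mul (by omega), ?_,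
    fun γ hγ => smul_subset_sdiff_coveredSet hanti.antitone hnormal (hfund _) hone hdecomp_mul
      (by omega) hγ⟩
  have hcard : ∀ s, ((D s).card : ℝ) ≠ 0 :=
    fun s => Nat.cast_ne_zero.2 (Finset.card_ne_zero_of_mem (hone s))
  rw [show n + 1 + j - n - 1 = j by omega, div_mul_prod_one_sub_div _ hcard,
    ncard_uncoveredSet hanti.antitone hnormal hfund hone hdecomp_mul, Nat.cast_prod]
  exact (Finset.prod_congr rfl fun l _ => card_succ_div_card_sub_one hfund hone hdecomp_mul _).le

theorem statement13 {G : Type*} [Group G] [Countable G]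
    -- the sequence of subgroups (with the convention `Γ 0 = G`)
    (Γ : ℕ → Subgroup G) (hΓ0 : Γ 0 = ⊤) (hanti : StrictAnti Γ)
    (hnormal : ∀ n, (Γ n).Normal) (hfi : ∀ n, (Γ n).FiniteIndex)
    (hint : (⨅ n, Γ n) = ⊥) (hidx : ∀ n, 3 ≤ (Γ (n + 1)).relIndex (Γ n))
    -- the fundamental domains
    (D : ℕ → Finset G) (hD0 : D 0 = {1}) (hfund : ∀ n, IsFundDomain (Γ n) (D n))
    (hone : ∀ n, (1 : G) ∈ D n) (hDmono : ∀ n, D n ⊆ D (n + 1))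
    (hcoverD : ∀ g : G, ∃ n, g ∈ D n)
    (hdecomp : ∀ i j, i < j →
      (D j : Set G) = ⋃ v ∈ (D j : Set G) ∩ (Γ i : Set G), v • (D i : Set G)) :
    ∀ n, 1 ≤ n → ∀ m, n + 2 ≤ m →
      ∀ S : Set G,
        S = ((Γ (n + 1) : Set G) ∩ (D m : Set G)) \
              ⋃ s ∈ Finset.Icc (n + 1) (m - 1), (D s : Set G) * ((Γ (s + 1) : Subgroup G) : Set G) →
        -- the set is nonempty
        S.Nonempty ∧
        -- the cardinality lower bound
        ((D m).card : ℝ) / (D (n + 1)).card *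
            ∏ l ∈ Finset.Icc 1 (m - n - 1), (1 - ((D (n + l)).card : ℝ) / (D (n + l + 1)).card)
          ≤ S.ncard ∧
        -- the translate property
        ∀ γ ∈ S, γ • (D (n + 1) : Set G) ⊆
          (D m : Set G) \
            ⋃ s ∈ Finset.Icc (n + 1) (m - 1), (D s : Set G) * ((Γ (s + 1) : Subgroup G) : Set G) :=
  statement13_general Γ hanti hnormal D hfund hone hdecomp
end

section
/- Let η be the constructed Toeplitz array and for n≥1 let U_n={x∈Σ^G : x(g)=η_n(g) for all g∈D_{n+1}}, where η_n∈Σ^G is defined by η_n(γg)=η(g) for γ∈Γ_n, g∈D_n. Let n≥1 and m>n with m≡n (mod r). If γ∈Γ_{n+1}∩D_m satisfies γ∉D_{n+1}Γ_{n+2} ∪ ⋯ ∪ D_{m-1}Γ_m, then σ^{γ⁻¹}η∈U_n; in particular U_n intersects the σ-orbit of η. -/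
open Pointwise MeasureTheory Filter Topology

/-!
Modulo `Γ (i + 1)`, `η` is constant equal to `α_{i+1}` on the classes of `J i`, and these classes,
for `i ≤ k`, partition the classes of `D k`. For `γ ∈ Γ (n + 1)` and `g ∈ D (n + 1)`, translating by
`γ` keeps `g` in its class modulo `Γ (i + 1)` for every `i ≤ n`, so `η (γ g) = η_n g` when `g` lies
in a class of some `J i`, `i ≤ n`. Otherwise `g` lies in a class of `J (n + 1)`; then the
avoidance condition forces `γ g ∈ J m`, so `η (γ g) = α_{m+1} = α_{n+1}`, which is also `η_n g`.
An avoiding `γ` is built level by level: from one at level `k`, translate by an element of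
`Γ k \ Γ (k + 1)` and reduce into `D (k + 1)`.
-/

section Cosets

variable {G : Type*} [Group G]

theorem mem_mul_subgroup_iff {X : Set G} {N : Subgroup G} {x : G} :
    x ∈ X * (N : Set G) ↔ (x : G ⧸ N) ∈ ((↑) : G → G ⧸ N) '' X := by
  rw [← QuotientGroup.preimage_image_mk_eq_mul]
  rfl

theorem mem_mul_subgroup_of_mk_eq {X : Set G} {N : Subgroup G} {x y : G}
    (hxy : (x : G ⧸ N) = y) (hx : x ∈ X * (N : Set G)) : y ∈ X * (N : Set G) := by
  rw [mem_mul_subgroup_iff] at hx ⊢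
  rwa [← hxy]

theorem QuotientGroup.mk_mul_of_mem_left {N : Subgroup G} [N.Normal] {c : G} (x : G)
    (hc : c ∈ N) : ((c * x : G) : G ⧸ N) = x := by
  rw [QuotientGroup.mk_mul, (QuotientGroup.eq_one_iff c).2 hc, one_mul]

theorem QuotientGroup.mk_eq_mk_of_le {N M : Subgroup G} (hNM : N ≤ M) {x y : G}
    (h : (x : G ⧸ N) = y) : (x : G ⧸ M) = y :=
  QuotientGroup.eq.2 (hNM (QuotientGroup.eq.1 h))

end Cosets

namespace IsFundDomain

variable {G : Type*} [Group G] {N : Subgroup G} [N.Normal] {D : Finset G}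

theorem exists_mk_eq (hD : IsFundDomain N D) (g : G) : ∃ u ∈ D, (u : G ⧸ N) = g := by
  obtain ⟨⟨γ, u⟩, ⟨hγ, hu, rfl⟩, -⟩ := hD g
  exact ⟨u, hu, (QuotientGroup.mk_mul_of_mem_left u hγ).symm⟩

theorem eq_of_mk_eq (hD : IsFundDomain N D) {a b : G} (ha : a ∈ D) (hb : b ∈ D)
    (hab : (a : G ⧸ N) = b) : a = b := by
  obtain ⟨p, -, hp⟩ := hD b
  have hb' := hp (1, b) ⟨one_mem _, hb, (one_mul b).symm⟩
  have ha' := hp (b / a, a)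
    ⟨QuotientGroup.eq_iff_div_mem.1 hab.symm, ha, (div_mul_cancel b a).symm⟩
  exact congrArg Prod.snd (ha'.trans hb'.symm)

theorem mem_of_mem_mul (hD : IsFundDomain N D) {E : Finset G} (hED : E ⊆ D) {x : G}
    (hx : x ∈ D) (hxE : x ∈ (E : Set G) * (N : Set G)) : x ∈ E := by
  obtain ⟨e, he, hex⟩ := mem_mul_subgroup_iff.1 hxE
  rwa [← hD.eq_of_mk_eq (hED he) hx hex]

end IsFundDomain

theorem apply_eq_of_mk_eq {G A : Type*} [Group G] {N : Subgroup G} [N.Normal] {f η : G → A}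
    {u g : G} (hf : ∀ γ ∈ N, f (γ * u) = η u) (hug : (u : G ⧸ N) = g) : f g = η u := by
  simpa using hf (g / u) (QuotientGroup.eq_iff_div_mem.1 hug.symm)

section Disjointification

variable {G : Type*} [Group G] {B J : ℕ → Set G} {H : ℕ → Subgroup G}

theorem subset_iUnion_mul_of_eq_diff (hJ : ∀ m, J m = B m \ ⋃ i < m, J i * (H i : Set G))
    (k : ℕ) : B k ⊆ ⋃ i ≤ k, J i * (H i : Set G) := by
  intro x hx
  by_cases hxJ : x ∈ J k
  · exact Set.mem_iUnion₂.2 ⟨k, le_rfl, x, hxJ, 1, one_mem _, mul_one x⟩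
  · rw [hJ k] at hxJ
    obtain ⟨i, hik, hxi⟩ := Set.mem_iUnion₂.1 (not_not.1 fun h => hxJ ⟨hx, h⟩)
    exact Set.mem_iUnion₂.2 ⟨i, hik.le, hxi⟩

theorem disjoint_mul_of_eq_diff (hJ : ∀ m, J m = B m \ ⋃ i < m, J i * (H i : Set G))
    {i j : ℕ} (hij : i < j) (hH : H j ≤ H i) :
    Disjoint (J i * (H i : Set G)) (J j * (H j : Set G)) := by
  rw [Set.disjoint_left]
  intro x hxi hxj
  obtain ⟨a, ha, b, hb, rfl⟩ := Set.mem_mul.1 hxi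
  obtain ⟨c, hc, d, hd, hcd⟩ := Set.mem_mul.1 hxj
  rw [hJ j] at hc
  refine hc.2 (Set.mem_iUnion₂.2 ⟨i, hij, a, ha, b * d⁻¹, mul_mem hb (inv_mem (hH hd)), ?_⟩)
  show a * (b * d⁻¹) = c
  rw [← mul_assoc, ← hcd, mul_inv_cancel_right]

end Disjointification

namespace Toeplitz

variable {G : Type*} [Group G] {Γ : ℕ → Subgroup G} {D : ℕ → Finset G} {J : ℕ → Set G}
  {A : Type*} {η ηn : G → A} {a : ℕ → A}

theorem exists_mul_eq_of_le (hone : ∀ n, (1 : G) ∈ D n)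
    (hdecomp : ∀ i j, i < j →
      (D j : Set G) = ⋃ v ∈ (D j : Set G) ∩ (Γ i : Set G), v • (D i : Set G))
    {i j : ℕ} (hij : i ≤ j) {x : G} (hx : x ∈ D j) :
    ∃ v ∈ D j, v ∈ Γ i ∧ ∃ w ∈ D i, v * w = x := by
  rcases hij.lt_or_eq with hlt | rfl
  · have hx' : x ∈ (D j : Set G) := hx
    rw [hdecomp i j hlt] at hx'
    obtain ⟨v, ⟨hvD, hvΓ⟩, w, hw, rfl⟩ := Set.mem_iUnion₂.1 hx'
    exact ⟨v, hvD, hvΓ, w, hw, rfl⟩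
  · exact ⟨1, hone i, one_mem _, x, hx, one_mul x⟩

theorem mem_mul_of_mul_mem_mul [∀ k, (Γ k).Normal] (hanti : Antitone Γ)
    (hone : ∀ n, (1 : G) ∈ D n)
    (hdecomp : ∀ i j, i < j →
      (D j : Set G) = ⋃ v ∈ (D j : Set G) ∩ (Γ i : Set G), v • (D i : Set G))
    {k s : ℕ} (hfund : IsFundDomain (Γ k) (D k)) (hks : k ≤ s) {γ g : G} (hγ : γ ∈ Γ k)
    (hg : g ∈ D k) (hγg : γ * g ∈ (D s : Set G) * (Γ (s + 1) : Set G)) :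
    γ ∈ (D s : Set G) * (Γ (s + 1) : Set G) := by
  obtain ⟨x, hx, δ, hδ, hxδ⟩ := Set.mem_mul.1 hγg
  obtain ⟨v, hv, hvΓ, w, hw, rfl⟩ := exists_mul_eq_of_le hone hdecomp hks hx
  have hgw : g = w := hfund.eq_of_mk_eq hg hw <| calc
    (g : G ⧸ Γ k) = (γ * g : G) := (QuotientGroup.mk_mul_of_mem_left g hγ).symm
    _ = (v * (w * δ) : G) := by rw [← hxδ, mul_assoc]
    _ = w := by
      rw [QuotientGroup.mk_mul_of_mem_left _ hvΓ,
        QuotientGroup.mk_mul_of_mem w (hanti (by omega) hδ)]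
  subst hgw
  have hγ_eq : γ = v * (g * δ * g⁻¹) := by
    rw [← mul_assoc, ← mul_assoc, hxδ, mul_inv_cancel_right]
  refine mem_mul_subgroup_iff.2 ⟨v, hv, ?_⟩
  rw [hγ_eq, QuotientGroup.mk_mul_of_mem v (Subgroup.Normal.conj_mem inferInstance δ hδ g)]


theorem apply_eq_of_mem_mul (hηdef : ∀ m, ∀ h ∈ J m, ∀ g ∈ Γ (m + 1), η (h * g) = a m)
    {i : ℕ} {x : G} (hx : x ∈ J i * (Γ (i + 1) : Set G)) : η x = a i := by
  obtain ⟨h, hh, δ, hδ, rfl⟩ := Set.mem_mul.1 hx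
  exact hηdef i h hh δ hδ

theorem apply_mul_eq_of_mem_mul_of_le [∀ k, (Γ k).Normal] (hanti : Antitone Γ) {n : ℕ}
    (hfund : IsFundDomain (Γ n) (D n)) (hJD : J n ⊆ D n)
    (hηdef : ∀ m, ∀ h ∈ J m, ∀ g ∈ Γ (m + 1), η (h * g) = a m)
    (hηn : ∀ γ ∈ Γ n, ∀ u ∈ D n, ηn (γ * u) = η u) {i : ℕ} (hin : i ≤ n) {γ g : G}
    (hγ : γ ∈ Γ (n + 1)) (hg : g ∈ J i * (Γ (i + 1) : Set G)) : η (γ * g) = ηn g := by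
  rw [apply_eq_of_mem_mul hηdef (mem_mul_subgroup_of_mk_eq
    (QuotientGroup.mk_mul_of_mem_left g (hanti (by omega) hγ)).symm hg)]
  rcases hin.lt_or_eq with hlt | rfl
  · obtain ⟨u, hu, hug⟩ := hfund.exists_mk_eq g
    rw [apply_eq_of_mk_eq (hηn · · u hu) hug, apply_eq_of_mem_mul hηdef
      (mem_mul_subgroup_of_mk_eq (QuotientGroup.mk_eq_mk_of_le (hanti hlt) hug).symm hg)]
  · obtain ⟨h, hh, δ, hδ, rfl⟩ := Set.mem_mul.1 hg
    rw [apply_eq_of_mk_eq (hηn · · h (hJD hh))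
      (QuotientGroup.mk_mul_of_mem h (hanti i.le_succ hδ)).symm]
    exact (apply_eq_of_mem_mul hηdef (Set.subset_mul_left _ (one_mem _) hh)).symm

theorem apply_eq_of_mem_mul_succ [∀ k, (Γ k).Normal] (hanti : Antitone Γ) {n : ℕ}
    (hfund : IsFundDomain (Γ n) (D n))
    (hJ : ∀ m, J m = (D m : Set G) \ ⋃ i < m, J i * (Γ (i + 1) : Set G))
    (hηdef : ∀ m, ∀ h ∈ J m, ∀ g ∈ Γ (m + 1), η (h * g) = a m)
    (hηn : ∀ γ ∈ Γ n, ∀ u ∈ D n, ηn (γ * u) = η u) {g : G}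
    (hg : g ∈ J (n + 1) * (Γ (n + 1 + 1) : Set G)) : ηn g = a n := by
  obtain ⟨u, hu, hug⟩ := hfund.exists_mk_eq g
  rw [apply_eq_of_mk_eq (hηn · · u hu) hug]
  obtain ⟨i, hin, hui⟩ := Set.mem_iUnion₂.1 (subset_iUnion_mul_of_eq_diff hJ n hu)
  rcases hin.lt_or_eq with hlt | rfl
  · have hgi := mem_mul_subgroup_of_mk_eq (QuotientGroup.mk_eq_mk_of_le (hanti hlt) hug) hui
    exact absurd hg
      (Set.disjoint_left.1 (disjoint_mul_of_eq_diff hJ (by omega) (hanti (by omega))) hgi)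
  · exact apply_eq_of_mem_mul hηdef hui

theorem mul_mem_of_forall_notMem_mul [∀ k, (Γ k).Normal] (hanti : Antitone Γ)
    (hone : ∀ n, (1 : G) ∈ D n)
    (hdecomp : ∀ i j, i < j →
      (D j : Set G) = ⋃ v ∈ (D j : Set G) ∩ (Γ i : Set G), v • (D i : Set G))
    (hJ : ∀ m, J m = (D m : Set G) \ ⋃ i < m, J i * (Γ (i + 1) : Set G)) {n m : ℕ}
    (hfund : IsFundDomain (Γ (n + 1)) (D (n + 1))) (hnm : n + 1 < m) {γ g : G}
    (hγ : γ ∈ Γ (n + 1)) (hγD : γ ∈ D m)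
    (havoid : ∀ s, n + 1 ≤ s → s < m → γ ∉ (D s : Set G) * (Γ (s + 1) : Set G))
    (hg : g ∈ D (n + 1)) (hgJ : g ∈ J (n + 1) * (Γ (n + 1 + 1) : Set G)) : γ * g ∈ J m := by
  rw [hJ m]
  refine ⟨?_, fun hmem => ?_⟩
  · rw [hdecomp (n + 1) m hnm]
    exact Set.mem_iUnion₂.2 ⟨γ, ⟨hγD, hγ⟩, Set.smul_mem_smul_set hg⟩
  obtain ⟨i, him, hi⟩ := Set.mem_iUnion₂.1 hmem
  rcases lt_or_ge i (n + 1) with hin | hin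
  · have hgi := mem_mul_subgroup_of_mk_eq (QuotientGroup.mk_mul_of_mem_left g (hanti hin hγ)) hi
    exact Set.disjoint_left.1 (disjoint_mul_of_eq_diff hJ hin (hanti (by omega))) hgi hgJ
  · have hJD : J i ⊆ D i := by
      rw [hJ i]
      exact Set.sdiff_subset
    exact havoid i hin him (mem_mul_of_mul_mem_mul hanti hone hdecomp hfund hin hγ hg
      (Set.mul_subset_mul_right hJD hi))

theorem apply_mul_eq_of_forall_notMem_mul [∀ k, (Γ k).Normal] (hanti : Antitone Γ)
    (hfund : ∀ k, IsFundDomain (Γ k) (D k)) (hone : ∀ n, (1 : G) ∈ D n)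
    (hdecomp : ∀ i j, i < j →
      (D j : Set G) = ⋃ v ∈ (D j : Set G) ∩ (Γ i : Set G), v • (D i : Set G))
    (hJ : ∀ m, J m = (D m : Set G) \ ⋃ i < m, J i * (Γ (i + 1) : Set G))
    (hηdef : ∀ m, ∀ h ∈ J m, ∀ g ∈ Γ (m + 1), η (h * g) = a m) {n m : ℕ}
    (hηn : ∀ γ ∈ Γ n, ∀ u ∈ D n, ηn (γ * u) = η u) (hnm : n + 1 < m) (ham : a m = a n)
    {γ : G} (hγ : γ ∈ Γ (n + 1)) (hγD : γ ∈ D m)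
    (havoid : ∀ s, n + 1 ≤ s → s < m → γ ∉ (D s : Set G) * (Γ (s + 1) : Set G))
    {g : G} (hg : g ∈ D (n + 1)) : η (γ * g) = ηn g := by
  have hJD : J n ⊆ D n := by
    rw [hJ n]
    exact Set.sdiff_subset
  obtain ⟨i, hin, hgi⟩ := Set.mem_iUnion₂.1 (subset_iUnion_mul_of_eq_diff hJ (n + 1) hg)
  rcases hin.lt_or_eq with hlt | rfl
  · exact apply_mul_eq_of_mem_mul_of_le hanti (hfund n) hJD hηdef hηn (by omega) hγ hgi
  · have hγg := mul_mem_of_forall_notMem_mul hanti hone hdecomp hJ (hfund (n + 1)) hnm hγ hγD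
      havoid hg hgi
    rw [apply_eq_of_mem_mul_succ hanti (hfund n) hJ hηdef hηn hgi, ← ham]
    exact apply_eq_of_mem_mul hηdef (Set.subset_mul_left _ (one_mem _) hγg)

theorem exists_forall_notMem_mul [∀ k, (Γ k).Normal] (hanti : StrictAnti Γ)
    (hfund : ∀ k, IsFundDomain (Γ k) (D k)) (hone : ∀ n, (1 : G) ∈ D n) (hDmono : Monotone D)
    {n k : ℕ} (hnk : n + 1 ≤ k) : ∃ w ∈ Γ (n + 1), w ∈ D k ∧
      ∀ s, n + 1 ≤ s → s < k → w ∉ (D s : Set G) * (Γ (s + 1) : Set G) := by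
  induction k, hnk using Nat.le_induction with
  | base => exact ⟨1, one_mem _, hone _, fun s h1 h2 _ => by omega⟩
  | succ k hk ih =>
    obtain ⟨w, hwΓ, hwD, hwav⟩ := ih
    obtain ⟨c, hc, hc'⟩ := SetLike.exists_of_lt (hanti k.lt_succ_self)
    obtain ⟨u, hu, huc⟩ := (hfund (k + 1)).exists_mk_eq (c * w)
    have hu_mk : ∀ j ≤ k, (u : G ⧸ Γ j) = w := fun j hj =>
      (QuotientGroup.mk_eq_mk_of_le (hanti.antitone (by omega)) huc).trans
        (QuotientGroup.mk_mul_of_mem_left w (hanti.antitone hj hc))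
    refine ⟨u, ?_, hu, fun s hs hsk hmem => ?_⟩
    · rw [← QuotientGroup.eq_one_iff, hu_mk (n + 1) hk, QuotientGroup.eq_one_iff]
      exact hwΓ
    rcases (Nat.lt_succ_iff.1 hsk).lt_or_eq with hlt | rfl
    · exact hwav s hs hlt (mem_mul_subgroup_of_mk_eq (hu_mk (s + 1) hlt) hmem)
    · have huw : u = w := (hfund s).eq_of_mk_eq
        ((hfund (s + 1)).mem_of_mem_mul (hDmono s.le_succ) hu hmem) hwD (hu_mk s le_rfl)
      subst huw
      rw [QuotientGroup.mk_mul] at huc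
      exact hc' ((QuotientGroup.eq_one_iff c).1 (right_eq_mul.1 huc))

end Toeplitz

theorem statement14_general {G : Type*} [Group G]
    {r : ℕ} (hr : 1 < r)
    -- the sequence of subgroups (with the convention `Γ 0 = G`, the data of the paper being
    -- `Γ 1 > Γ 2 > ⋯`)
    (Γ : ℕ → Subgroup G) (hanti : StrictAnti Γ)
    (hnormal : ∀ n, (Γ n).Normal)
    -- the fundamental domains
    (D : ℕ → Finset G) (hD0 : D 0 = {1}) (hfund : ∀ n, IsFundDomain (Γ n) (D n))
    (hone : ∀ n, (1 : G) ∈ D n) (hDmono : ∀ n, D n ⊆ D (n + 1))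
    (hdecomp : ∀ i j, i < j →
      (D j : Set G) = ⋃ v ∈ (D j : Set G) ∩ (Γ i : Set G), v • (D i : Set G))
    -- the sets `J m`
    (J : ℕ → Set G) (hJ0 : J 0 = {1})
    (hJ : ∀ m, 1 ≤ m → J m = (D m : Set G) \ ⋃ i < m, J i * ((Γ (i + 1) : Subgroup G) : Set G))
    -- the Toeplitz array `η`
    (η : G → Fin r)
    (hηdef : ∀ (m : ℕ), ∀ h ∈ J m, ∀ g ∈ Γ (m + 1), η (h * g) = sym hr m)
    -- the `Γ n`-periodic configurations `η_n`, with `η_n(γ g) = η(g)` for `γ ∈ Γ n`, `g ∈ D n`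
    (ηn : ℕ → G → Fin r) (hηn : ∀ n, ∀ γ ∈ Γ n, ∀ g ∈ D n, ηn n (γ * g) = η g)
    -- the cylinder sets `U n = {x : x|_{D (n+1)} = η_n|_{D (n+1)}}`
    (U : ℕ → Set (G → Fin r)) (hU : ∀ n, U n = {x | ∀ g ∈ D (n + 1), x g = ηn n g}) :
    ∀ n, 1 ≤ n → ∀ m, n < m → m % r = n % r →
      (∀ γ ∈ Γ (n + 1), γ ∈ D m →
        γ ∉ ⋃ s ∈ Finset.Icc (n + 1) (m - 1),
              (D s : Set G) * ((Γ (s + 1) : Subgroup G) : Set G) →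
        shift γ⁻¹ η ∈ U n) ∧
      -- in particular, `U n` meets the `σ`-orbit of `η`
      ∃ g : G, shift g η ∈ U n := by
  intro n _ m hnm hmod
  have hJ' : ∀ m, J m = (D m : Set G) \ ⋃ i < m, J i * (Γ (i + 1) : Set G) := by
    rintro (_ | m)
    · simp [hJ0, hD0]
    · exact hJ (m + 1) (by omega)
  have hnm' : n + 1 < m := by
    have := Nat.le_of_dvd (by omega) (Nat.dvd_of_mod_eq_zero (Nat.sub_mod_eq_zero_of_mod_eq hmod))
    omega
  have hshift : ∀ γ ∈ Γ (n + 1), γ ∈ D m →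
      (∀ s, n + 1 ≤ s → s < m → γ ∉ (D s : Set G) * (Γ (s + 1) : Set G)) →
      shift γ⁻¹ η ∈ U n := by
    intro γ hγ hγD havoid
    rw [hU]
    intro g hg
    simpa [shift] using Toeplitz.apply_mul_eq_of_forall_notMem_mul hanti.antitone hfund hone
      hdecomp hJ' hηdef (hηn n) hnm' (Fin.ext hmod) hγ hγD havoid hg
  refine ⟨fun γ hγ hγD hγU => hshift γ hγ hγD fun s hs hsm hmem =>
    hγU (Set.mem_iUnion₂.2 ⟨s, Finset.mem_Icc.2 ⟨hs, by omega⟩, hmem⟩), ?_⟩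
  obtain ⟨w, hw, hwD, hwav⟩ :=
    Toeplitz.exists_forall_notMem_mul hanti hfund hone (monotone_nat_of_le_succ hDmono) hnm'.le
  exact ⟨w⁻¹, hshift w hw hwD hwav⟩

theorem statement14 {G : Type*} [Group G] [Countable G]
    {r : ℕ} (hr : 1 < r)
    -- the sequence of subgroups (with the convention `Γ 0 = G`, the data of the paper being
    -- `Γ 1 > Γ 2 > ⋯`)
    (Γ : ℕ → Subgroup G) (hΓ0 : Γ 0 = ⊤) (hanti : StrictAnti Γ)
    (hnormal : ∀ n, (Γ n).Normal) (hfi : ∀ n, (Γ n).FiniteIndex)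
    (hint : (⨅ n, Γ n) = ⊥) (hidx : ∀ n, 3 ≤ (Γ (n + 1)).relIndex (Γ n))
    -- the fundamental domains
    (D : ℕ → Finset G) (hD0 : D 0 = {1}) (hfund : ∀ n, IsFundDomain (Γ n) (D n))
    (hone : ∀ n, (1 : G) ∈ D n) (hDmono : ∀ n, D n ⊆ D (n + 1))
    (hcoverD : ∀ g : G, ∃ n, g ∈ D n)
    (hdecomp : ∀ i j, i < j →
      (D j : Set G) = ⋃ v ∈ (D j : Set G) ∩ (Γ i : Set G), v • (D i : Set G))
    -- the sets `J m`
    (J : ℕ → Set G) (hJ0 : J 0 = {1})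
    (hJ : ∀ m, 1 ≤ m → J m = (D m : Set G) \ ⋃ i < m, J i * ((Γ (i + 1) : Subgroup G) : Set G))
    -- the Toeplitz array `η`
    (η : G → Fin r)
    (hηdef : ∀ (m : ℕ), ∀ h ∈ J m, ∀ g ∈ Γ (m + 1), η (h * g) = sym hr m)
    -- the `Γ n`-periodic configurations `η_n`, with `η_n(γ g) = η(g)` for `γ ∈ Γ n`, `g ∈ D n`
    (ηn : ℕ → G → Fin r) (hηn : ∀ n, ∀ γ ∈ Γ n, ∀ g ∈ D n, ηn n (γ * g) = η g)
    -- the cylinder sets `U n = {x : x|_{D (n+1)} = η_n|_{D (n+1)}}`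
    (U : ℕ → Set (G → Fin r)) (hU : ∀ n, U n = {x | ∀ g ∈ D (n + 1), x g = ηn n g}) :
    ∀ n, 1 ≤ n → ∀ m, n < m → m % r = n % r →
      (∀ γ ∈ Γ (n + 1), γ ∈ D m →
        γ ∉ ⋃ s ∈ Finset.Icc (n + 1) (m - 1),
              (D s : Set G) * ((Γ (s + 1) : Subgroup G) : Set G) →
        shift γ⁻¹ η ∈ U n) ∧
      -- in particular, `U n` meets the `σ`-orbit of `η`
      ∃ g : G, shift g η ∈ U n :=
  statement14_general hr Γ hanti hnormal D hD0 hfund hone hDmono hdecomp J hJ0 hJ η hηdef ηn hηn U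
    hU
end

section
/- If μ and ν are invariant Borel probability measures of (X,σ,G) with μ(C_{0,i})=ν(C_{0,i}) for every 1≤i≤r, where C_{0,i}={x∈X : x(1_G)=i}, then μ(P)=ν(P) for every n∈ℕ and every element P of the clopen partition 𝒫_n={σ^{v⁻¹}C_{n,i} : 1≤i≤r, v∈D_n} of X. -/
open Pointwise MeasureTheory Filter Topology

/-- Auxiliary context bundling the combinatorial data of the Toeplitz construction. -/
structure TCtx (G : Type*) [Group G] (r : ℕ) where
  hr : 1 < r
  Γ : ℕ → Subgroup G
  D : ℕ → Finset G
  J : ℕ → Set G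
  η : G → Fin r
  hΓ0 : Γ 0 = ⊤
  hanti : StrictAnti Γ
  hnormal : ∀ n, (Γ n).Normal
  hD0 : D 0 = {1}
  hfund : ∀ n, IsFundDomain (Γ n) (D n)
  hone : ∀ n, (1 : G) ∈ D n
  hDmono : ∀ n, D n ⊆ D (n + 1)
  hcoverD : ∀ g : G, ∃ n, g ∈ D n
  hdecomp : ∀ i j, i < j → (D j : Set G) = ⋃ v ∈ (D j : Set G) ∩ (Γ i : Set G), v • (D i : Set G)
  hJ0 : J 0 = {1}
  hJ : ∀ m, 1 ≤ m → J m = (D m : Set G) \ ⋃ i < m, J i * ((Γ (i + 1) : Subgroup G) : Set G)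
  hηdef : ∀ m, ∀ h ∈ J m, ∀ g ∈ Γ (m + 1), η (h * g) = sym hr m

namespace TCtx

variable {G : Type*} [Group G] {r : ℕ} (c : TCtx G r)

/-- The "level `j`" set `J(j)Γ_{j+1}`. -/
def L (j : ℕ) : Set G := c.J j * ((c.Γ (j + 1) : Subgroup G) : Set G)

lemma gamma_le {m n : ℕ} (h : m ≤ n) : c.Γ n ≤ c.Γ m := c.hanti.antitone h

lemma D_le {m n : ℕ} (h : m ≤ n) : c.D m ⊆ c.D n := by
  induction n with
  | zero => simpa [Nat.le_zero.mp h] using Finset.Subset.refl _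
  | succ k ih =>
    rcases Nat.lt_or_ge m (k+1) with h' | h'
    · exact (ih (by omega)).trans (c.hDmono k)
    · have : m = k + 1 := by omega
      simp [this]

lemma fund_unique {n : ℕ} {γ u γ' u' : G} (hγ : γ ∈ c.Γ n) (hu : u ∈ c.D n)
    (hγ' : γ' ∈ c.Γ n) (hu' : u' ∈ c.D n) (h : γ * u = γ' * u') : γ = γ' ∧ u = u' := by
  obtain ⟨p, -, hup⟩ := c.hfund n (γ * u)
  have h1 := hup (γ, u) ⟨hγ, hu, rfl⟩
  have h2 := hup (γ', u') ⟨hγ', hu', h⟩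
  have h3 : ((γ, u) : G × G) = (γ', u') := h1.trans h2.symm
  exact ⟨congrArg Prod.fst h3, congrArg Prod.snd h3⟩

lemma exists_dec (n : ℕ) (g : G) : ∃ γ u, γ ∈ c.Γ n ∧ u ∈ c.D n ∧ g = γ * u := by
  obtain ⟨p, ⟨h1, h2, h3⟩, -⟩ := c.hfund n g
  exact ⟨p.1, p.2, h1, h2, h3⟩

lemma one_mem_J0 : (1 : G) ∈ c.J 0 := by rw [c.hJ0]; rfl

lemma J_sub_D (m : ℕ) : c.J m ⊆ (c.D m : Set G) := by
  cases m with
  | zero => rw [c.hJ0, c.hD0]; simp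
  | succ k => rw [c.hJ (k+1) (by omega)]; exact Set.diff_subset

lemma J_not_L {m i : ℕ} (hi : i < m) {u : G} (hu : u ∈ c.J m) : u ∉ c.L i := by
  intro hL
  have hm : 1 ≤ m := by omega
  rw [c.hJ m hm] at hu
  exact hu.2 (Set.mem_biUnion hi hL)

lemma mem_J_iff {m : ℕ} (hm : 1 ≤ m) {u : G} :
    u ∈ c.J m ↔ u ∈ (c.D m : Set G) ∧ ∀ i < m, u ∉ c.L i := by
  rw [c.hJ m hm]
  constructor
  · rintro ⟨h1, h2⟩
    exact ⟨h1, fun i hi hL => h2 (Set.mem_biUnion hi hL)⟩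
  · rintro ⟨h1, h2⟩
    refine ⟨h1, fun hmem => ?_⟩
    obtain ⟨i, hi, hL⟩ := Set.mem_iUnion₂.1 hmem
    exact h2 i hi hL

lemma mem_L_iff {j : ℕ} {z : G} : z ∈ c.L j ↔ ∃ h ∈ c.J j, ∃ t ∈ c.Γ (j + 1), z = h * t := by
  constructor
  · rintro ⟨h, hh, t, ht, rfl⟩
    exact ⟨h, hh, t, ht, rfl⟩
  · rintro ⟨h, hh, t, ht, rfl⟩
    exact ⟨h, hh, t, ht, rfl⟩

lemma J_sub_L (j : ℕ) : c.J j ⊆ c.L j := fun h hh =>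
  c.mem_L_iff.2 ⟨h, hh, 1, (c.Γ (j+1)).one_mem, by simp⟩

/-- Normality: `L j` written with the subgroup element on the left. -/
lemma mem_L_iff' {j : ℕ} {z : G} : z ∈ c.L j ↔ ∃ t ∈ c.Γ (j + 1), ∃ h ∈ c.J j, z = t * h := by
  have N := c.hnormal (j+1)
  rw [c.mem_L_iff]
  constructor
  · rintro ⟨h, hh, t, ht, rfl⟩
    refine ⟨h * t * h⁻¹, N.conj_mem t ht h, h, hh, by group⟩
  · rintro ⟨t, ht, h, hh, rfl⟩
    refine ⟨h, hh, h⁻¹ * t * h, by simpa using N.conj_mem t ht h⁻¹, by group⟩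

lemma eta_L {j : ℕ} {z : G} (hz : z ∈ c.L j) : c.η z = sym c.hr j := by
  obtain ⟨h, hh, t, ht, rfl⟩ := c.mem_L_iff.1 hz
  exact c.hηdef j h hh t ht

/-- Left invariance of `L j` under `Γ i` for `j < i`. -/
lemma L_inv {i j : ℕ} (hij : j < i) {γ z : G} (hγ : γ ∈ c.Γ i) (hz : z ∈ c.L j) :
    γ * z ∈ c.L j := by
  obtain ⟨t, ht, h, hh, rfl⟩ := c.mem_L_iff'.1 hz
  have hγ' : γ ∈ c.Γ (j+1) := c.gamma_le (by omega) hγ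
  exact c.mem_L_iff'.2 ⟨γ * t, (c.Γ (j+1)).mul_mem hγ' ht, h, hh, by group⟩

lemma L_inv_iff {i j : ℕ} (hij : j < i) {γ z : G} (hγ : γ ∈ c.Γ i) :
    γ * z ∈ c.L j ↔ z ∈ c.L j := by
  constructor
  · intro h
    have := c.L_inv hij ((c.Γ i).inv_mem hγ) h
    simpa using this
  · exact c.L_inv hij hγ

lemma L_cover (z : G) : ∃ j, z ∈ c.L j := by
  obtain ⟨n, hn⟩ := c.hcoverD z
  induction n generalizing z with
  | zero =>
    refine ⟨0, ?_⟩
    rw [c.hD0] at hn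
    simp only [Finset.mem_singleton] at hn
    subst hn
    exact c.J_sub_L 0 c.one_mem_J0
  | succ k ih =>
    by_cases h : ∃ i < k + 1, z ∈ c.L i
    · obtain ⟨i, -, hi⟩ := h
      exact ⟨i, hi⟩
    · push_neg at h
      refine ⟨k + 1, c.J_sub_L _ ?_⟩
      exact (c.mem_J_iff (by omega)).2 ⟨hn, h⟩

lemma L_disj {i j : ℕ} (hij : i < j) {z : G} (hzi : z ∈ c.L i) (hzj : z ∈ c.L j) : False := by
  obtain ⟨h, hh, t, ht, hz⟩ := c.mem_L_iff.1 hzj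
  have : h ∈ c.L i := by
    obtain ⟨h', hh', t', ht', hz'⟩ := c.mem_L_iff.1 hzi
    refine c.mem_L_iff.2 ⟨h', hh', t' * t⁻¹,
      (c.Γ (i+1)).mul_mem ht' ((c.Γ (i+1)).inv_mem (c.gamma_le (by omega) ht)), ?_⟩
    rw [← mul_assoc, ← hz', hz, mul_assoc, mul_inv_cancel, mul_one]
  exact c.J_not_L hij hh this

lemma L_unique {i j : ℕ} {z : G} (hzi : z ∈ c.L i) (hzj : z ∈ c.L j) : i = j := by
  rcases lt_trichotomy i j with h | h | h
  · exact absurd (c.L_disj h hzi hzj) id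
  · exact h
  · exact absurd (c.L_disj h hzj hzi) id

/-- If `z` avoids all levels below `m`, its `D m`-component lies in `J m`. -/
lemma rep_mem_J {m : ℕ} {z γ u : G} (hz : ∀ i < m, z ∉ c.L i)
    (hγ : γ ∈ c.Γ m) (hu : u ∈ c.D m) (hzdec : z = γ * u) : u ∈ c.J m := by
  cases m with
  | zero =>
    rw [c.hD0] at hu
    simp only [Finset.mem_singleton] at hu
    subst hu
    exact c.one_mem_J0
  | succ k =>
    refine (c.mem_J_iff (by omega)).2 ⟨hu, fun i hi hL => hz i hi ?_⟩
    rw [hzdec]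
    exact c.L_inv (by omega) hγ hL

/-- `L j ∩ D (j+1) ⊆ J j`. -/
lemma L_inter_D {j : ℕ} {z : G} (hz : z ∈ c.L j) (hzD : z ∈ c.D (j + 1)) : z ∈ c.J j := by
  obtain ⟨t, ht, h, hh, hdec⟩ := c.mem_L_iff'.1 hz
  have h1 : (1 : G) * z = t * h := by simpa using hdec
  have := c.fund_unique (n := j + 1) (c.Γ (j+1)).one_mem hzD ht
    (c.D_le (by omega) (c.J_sub_D j hh)) h1
  rw [this.2]
  exact hh

/-- If `u ∈ Γ n ∩ D n` then `u = 1`. -/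
lemma eq_one_of_mem_inter {n : ℕ} {u : G} (hu : u ∈ c.Γ n) (huD : u ∈ c.D n) : u = 1 := by
  have h1 : u * (1 : G) = 1 * u := by group
  exact (c.fund_unique hu (c.hone n) (c.Γ n).one_mem huD h1).1

/-- For `n ≤ j`, `u ∈ Γ n ∩ D j`, `g ∈ D n`: `u * g ∈ D j`. -/
lemma mul_mem_D {n j : ℕ} (hnj : n ≤ j) {u g : G} (huΓ : u ∈ c.Γ n) (huD : u ∈ c.D j)
    (hg : g ∈ c.D n) : u * g ∈ c.D j := by
  rcases eq_or_lt_of_le hnj with h | h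
  · subst h
    rw [c.eq_one_of_mem_inter huΓ huD, one_mul]
    exact hg
  · have hd := c.hdecomp n j h
    have : (u * g : G) ∈ (c.D j : Set G) := by
      rw [hd]
      refine Set.mem_biUnion (s := (c.D j : Set G) ∩ (c.Γ n : Set G)) ⟨huD, huΓ⟩ ?_
      exact ⟨g, hg, rfl⟩
    exact this

/-- Conversely, for `n ≤ j`, `u ∈ Γ n`, `g ∈ D n`, `u * g ∈ D j` implies `u ∈ D j`. -/
lemma mem_D_of_mul {n j : ℕ} (hnj : n ≤ j) {u g : G} (huΓ : u ∈ c.Γ n)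
    (hg : g ∈ c.D n) (h : u * g ∈ c.D j) : u ∈ c.D j := by
  rcases eq_or_lt_of_le hnj with h' | h'
  · subst h'
    have h1 : u * g = 1 * (u * g) := by group
    have := (c.fund_unique huΓ hg (c.Γ n).one_mem h h1).1
    rw [this]
    exact c.hone n
  · have hd := c.hdecomp n j h'
    have hm : (u * g : G) ∈ (c.D j : Set G) := h
    rw [hd] at hm
    obtain ⟨v, hv, g₁, hg₁, hvg₁⟩ := Set.mem_iUnion₂.1 hm
    have : v * g₁ = u * g := hvg₁
    have := c.fund_unique (n := n) hv.2 hg₁ huΓ hg this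
    rw [← this.1]
    exact hv.1

/-- K2a: if `z` avoids levels below `m`, there is `γ ∈ Γ m` with `γ z ∈ J m`. -/
lemma exists_J_in_coset {m : ℕ} {z : G} (hz : ∀ i < m, z ∉ c.L i) :
    ∃ γ ∈ c.Γ m, γ * z ∈ c.J m := by
  obtain ⟨γ, u, hγ, hu, hdec⟩ := c.exists_dec m z
  refine ⟨γ⁻¹, (c.Γ m).inv_mem hγ, ?_⟩
  have : γ⁻¹ * z = u := by rw [hdec]; group
  rw [this]
  exact c.rep_mem_J hz hγ hu hdec

/-- K2b: if `z` avoids levels below `m`, there is `γ ∈ Γ m` with `γ z ∈ J (m+1)`. -/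
lemma exists_J_succ_in_coset {m : ℕ} {z : G} (hz : ∀ i < m, z ∉ c.L i) :
    ∃ γ ∈ c.Γ m, γ * z ∈ c.J (m + 1) := by
  obtain ⟨γ₀, hγ₀, hu⟩ := c.exists_J_in_coset hz
  set u := γ₀ * z with hu_def
  have hlt : c.Γ (m + 1) < c.Γ m := c.hanti (by omega)
  obtain ⟨δ, hδm, hδm1⟩ : ∃ δ, δ ∈ c.Γ m ∧ δ ∉ c.Γ (m + 1) := by
    by_contra hcon
    push_neg at hcon
    exact absurd (le_antisymm hlt.le (fun x hx => hcon x hx)) (ne_of_lt hlt)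
  have hw : ∀ i < m + 1, δ * u ∉ c.L i := by
    intro i hi hL
    rcases Nat.lt_or_ge i m with him | him
    · have : u ∈ c.L i := by
        have := c.L_inv him ((c.Γ m).inv_mem hδm) hL
        simpa [← mul_assoc] using this
      have : z ∈ c.L i := by
        have := c.L_inv him ((c.Γ m).inv_mem hγ₀) this
        simpa [hu_def, ← mul_assoc] using this
      exact hz i him this
    · have him' : i = m := by omega
      rw [him'] at hL
      obtain ⟨t, ht, h, hh, hdec⟩ := c.mem_L_iff'.1 hL
      have := c.fund_unique (n := m) hδm (c.J_sub_D m hu) (c.gamma_le (by omega) ht)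
        (c.J_sub_D m hh) hdec
      exact hδm1 (this.1 ▸ ht)
  obtain ⟨γ₁, hγ₁, hres⟩ := c.exists_J_in_coset (m := m + 1) hw
  refine ⟨γ₁ * δ * γ₀, ?_, ?_⟩
  · exact (c.Γ m).mul_mem ((c.Γ m).mul_mem (c.gamma_le (by omega) hγ₁) hδm) hγ₀
  · have : γ₁ * δ * γ₀ * z = γ₁ * (δ * u) := by rw [hu_def]; group
    rw [this]
    exact hres

lemma J_nonempty (m : ℕ) : (c.J m).Nonempty := by
  induction m with
  | zero => exact ⟨1, c.one_mem_J0⟩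
  | succ k ih =>
    obtain ⟨h, hh⟩ := ih
    have hz : ∀ i < k, h ∉ c.L i := fun i hi => c.J_not_L hi hh
    obtain ⟨γ, -, hmem⟩ := c.exists_J_succ_in_coset hz
    exact ⟨γ * h, hmem⟩

lemma sym_eq_iff {a b : ℕ} : sym c.hr a = sym c.hr b ↔ a % r = b % r := by
  constructor
  · intro h
    exact congrArg Fin.val h
  · intro h
    exact Fin.ext h

lemma sym_succ_ne {a : ℕ} : sym c.hr a ≠ sym c.hr (a + 1) := by
  intro h
  have h1 : a % r = (a + 1) % r := congrArg Fin.val h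
  have h2 : r ∣ (a + 1) - a := (Nat.modEq_iff_dvd' (by omega)).1 h1
  have hr := c.hr
  simp only [Nat.add_sub_cancel_left] at h2
  have := Nat.le_of_dvd (by omega) h2
  omega

/-- `Per(η, Γ n, α)` is exactly the union of the levels `< n` with symbol `α`. -/
lemma per_eta {n : ℕ} (hn : 1 ≤ n) (α : Fin r) :
    Per c.η (c.Γ n) α = {z | ∃ j < n, z ∈ c.L j ∧ sym c.hr j = α} := by
  ext z
  constructor
  · intro hz
    obtain ⟨j, hj⟩ := c.L_cover z
    rcases Nat.lt_or_ge j n with hjn | hjn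
    · refine ⟨j, hjn, hj, ?_⟩
      have h1 : c.η z = α := by simpa using hz 1 (c.Γ n).one_mem
      rw [← h1, c.eta_L hj]
    · exfalso
      have hz' : ∀ i < n, z ∉ c.L i := by
        intro i hi hL
        exact c.L_disj (by omega) hL hj
      obtain ⟨γ₁, hγ₁, h₁⟩ := c.exists_J_in_coset (m := n) hz'
      obtain ⟨γ₂, hγ₂, h₂⟩ := c.exists_J_succ_in_coset (m := n) hz'
      have e₁ : c.η (γ₁ * z) = α := hz γ₁ hγ₁
      have e₂ : c.η (γ₂ * z) = α := hz γ₂ hγ₂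
      have v₁ : c.η (γ₁ * z) = sym c.hr n := c.eta_L (c.J_sub_L n h₁)
      have v₂ : c.η (γ₂ * z) = sym c.hr (n + 1) := c.eta_L (c.J_sub_L (n+1) h₂)
      exact c.sym_succ_ne (by rw [← v₁, e₁, ← e₂, v₂])
  · rintro ⟨j, hjn, hzj, hsym⟩
    intro γ hγ
    have : γ * z ∈ c.L j := c.L_inv hjn hγ hzj
    rw [c.eta_L this, hsym]

/-- K4: if left translation by `c'` maps each `Per(η, Γ n, α)` into itself, then `c' ∈ Γ n`. -/
lemma mem_gamma_of_per_inv {n : ℕ} (hn : 1 ≤ n) {x : G}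
    (hper : ∀ α : Fin r, ∀ g ∈ Per c.η (c.Γ n) α, x * g ∈ Per c.η (c.Γ n) α) :
    x ∈ c.Γ n := by
  suffices h : ∀ m ≤ n, x ∈ c.Γ m by exact h n le_rfl
  intro m hm
  induction m with
  | zero => rw [c.hΓ0]; trivial
  | succ k ih =>
    have hk : x ∈ c.Γ k := ih (by omega)
    obtain ⟨h, hh⟩ := c.J_nonempty k
    -- h ∈ Per(η, Γ n, sym k)
    have hhL : h ∈ c.L k := c.J_sub_L k hh
    have hPer : h ∈ Per c.η (c.Γ n) (sym c.hr k) := by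
      rw [c.per_eta hn]
      exact ⟨k, by omega, hhL, rfl⟩
    have hxh : x * h ∈ Per c.η (c.Γ n) (sym c.hr k) := hper _ h hPer
    -- x * h avoids levels < k
    have havoid : ∀ i < k, x * h ∉ c.L i := by
      intro i hi hL
      have : h ∈ c.L i := by
        have := c.L_inv hi ((c.Γ k).inv_mem hk) hL
        simpa [← mul_assoc] using this
      exact c.J_not_L hi hh this
    obtain ⟨j, hj⟩ := c.L_cover (x * h)
    have hjk : k ≤ j := by
      by_contra hcon
      exact havoid j (by omega) hj
    rcases eq_or_lt_of_le hjk with hjk' | hjk'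
    · -- level k : conclude x ∈ Γ (k+1)
      rw [← hjk'] at hj
      obtain ⟨t, ht, h', hh', hdec⟩ := c.mem_L_iff'.1 hj
      have := c.fund_unique (n := k) hk (c.J_sub_D k hh) (c.gamma_le (by omega) ht)
        (c.J_sub_D k hh') hdec
      rw [this.1]
      exact ht
    · -- level j > k : contradiction via a level (k+1) point in Γ(k+1)(x h)
      exfalso
      have havoid' : ∀ i < k + 1, x * h ∉ c.L i := by
        intro i hi hL
        rcases Nat.lt_or_ge i k with h' | h'
        · exact havoid i h' hL
        · have : i = k := by omega
          subst this
          exact c.L_disj hjk' hL hj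
      obtain ⟨γ₁, hγ₁, h₁⟩ := c.exists_J_in_coset (m := k + 1) havoid'
      -- γ₁ * (x * h) ∈ J (k+1), but also ∈ Per(η, Γ n, sym k) since
      -- γ₁ * x * h = x * ((x⁻¹ γ₁ x) * h) and (x⁻¹ γ₁ x) * h ∈ L k ⊆ Per(η, Γ n, sym k).
      have hconj : x⁻¹ * γ₁ * x ∈ c.Γ (k + 1) := by
        have := (c.hnormal (k+1)).conj_mem γ₁ hγ₁ x⁻¹
        simpa [mul_assoc] using this
      have hLk : (x⁻¹ * γ₁ * x) * h ∈ c.L k := by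
        rw [c.mem_L_iff']
        exact ⟨x⁻¹ * γ₁ * x, hconj, h, hh, rfl⟩
      have hPer' : (x⁻¹ * γ₁ * x) * h ∈ Per c.η (c.Γ n) (sym c.hr k) := by
        rw [c.per_eta hn]
        exact ⟨k, by omega, hLk, rfl⟩
      have hmem : γ₁ * (x * h) ∈ Per c.η (c.Γ n) (sym c.hr k) := by
        have := hper _ _ hPer'
        have e : x * ((x⁻¹ * γ₁ * x) * h) = γ₁ * (x * h) := by group
        rwa [e] at this
      have e1 : c.η (γ₁ * (x * h)) = sym c.hr k := by
        simpa using hmem 1 (c.Γ n).one_mem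
      have e2 : c.η (γ₁ * (x * h)) = sym c.hr (k + 1) := c.eta_L (c.J_sub_L (k+1) h₁)
      exact c.sym_succ_ne (e1.symm.trans e2 : _)

/-- K6: for `w ∈ Γ n` and `g, g' ∈ J n`, the levels of `w g` and `w g'` coincide. -/
lemma level_const {n : ℕ} (hn : 1 ≤ n) :
    ∀ k (w : G), w ∈ c.Γ n → w ∈ c.D k → ∀ g g' : G, g ∈ c.J n → g' ∈ c.J n →
      ∀ j, (w * g ∈ c.L j ↔ w * g' ∈ c.L j) := by
  intro k
  induction k using Nat.strong_induction_on with
  | _ k IH =>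
    intro w hwΓ hwD g g' hg hg'
    have key : ∀ a b : G, a ∈ c.J n → b ∈ c.J n → ∀ j,
        (∀ i < j, (w * a ∈ c.L i ↔ w * b ∈ c.L i)) → w * a ∈ c.L j → w * b ∈ c.L j := by
      intro a b ha hb j IHin hwa
      rcases Nat.lt_or_ge j n with hjn | hjn
      · exact absurd ((c.L_inv_iff hjn hwΓ).1 hwa) (c.J_not_L hjn ha)
      · rcases Nat.lt_or_ge (j + 1) k with hk | hk
        · -- use the outer induction on the `D (j+1)`-component of `w`
          obtain ⟨t, u, ht, hu, hdec⟩ := c.exists_dec (j + 1) w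
          have huΓ : u ∈ c.Γ n := by
            have : u = t⁻¹ * w := by rw [hdec]; group
            rw [this]
            exact (c.Γ n).mul_mem ((c.Γ n).inv_mem (c.gamma_le (by omega) ht)) hwΓ
          have hJa : u * a ∈ c.J j := by
            obtain ⟨t₁, ht₁, h₁, hh₁, hdec₁⟩ := c.mem_L_iff'.1 hwa
            have e : u * a = (t⁻¹ * t₁) * h₁ := by
              rw [show u = t⁻¹ * w by rw [hdec]; group, mul_assoc, hdec₁]; group
            have : u * a ∈ c.L j := c.mem_L_iff'.2
              ⟨t⁻¹ * t₁, (c.Γ (j+1)).mul_mem ((c.Γ (j+1)).inv_mem ht) ht₁, h₁, hh₁, e⟩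
            exact c.L_inter_D this (c.mul_mem_D (by omega) huΓ hu (c.J_sub_D n ha))
          have hLb : u * b ∈ c.L j := by
            have := IH (j + 1) hk u huΓ hu a b ha hb j
            exact this.1 (c.J_sub_L j hJa)
          have hJb : u * b ∈ c.J j :=
            c.L_inter_D hLb (c.mul_mem_D (by omega) huΓ hu (c.J_sub_D n hb))
          refine c.mem_L_iff'.2 ⟨t, ht, u * b, hJb, ?_⟩
          rw [← mul_assoc, ← hdec]
        · -- `w ∈ D (j+1)` already
          have hwD' : w ∈ c.D (j + 1) := c.D_le (by omega) hwD
          have hJa : w * a ∈ c.J j :=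
            c.L_inter_D hwa (c.mul_mem_D (by omega) hwΓ hwD' (c.J_sub_D n ha))
          have hwDj : w ∈ c.D j :=
            c.mem_D_of_mul hjn hwΓ (c.J_sub_D n ha) (c.J_sub_D j hJa)
          have hbD : w * b ∈ c.D j := c.mul_mem_D hjn hwΓ hwDj (c.J_sub_D n hb)
          have : w * b ∈ c.J j := by
            refine (c.mem_J_iff (by omega)).2 ⟨hbD, fun i hi hL => ?_⟩
            rcases Nat.lt_or_ge i n with hin | hin
            · exact c.J_not_L hin hb ((c.L_inv_iff hin hwΓ).1 hL)
            · exact c.J_not_L hi hJa ((IHin i hi).2 hL)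
          exact c.J_sub_L j this
    intro j
    induction j using Nat.strong_induction_on with
    | _ j IHj =>
      exact ⟨key g g' hg hg' j (fun i hi => IHj i hi),
        key g' g hg' hg j (fun i hi => (IHj i hi).symm)⟩

end TCtx

section ShiftLemmas

variable {G A : Type*} [Group G]

lemma shift_apply (g : G) (x : G → A) (h : G) : shift g x h = x (g⁻¹ * h) := rfl

lemma shift_mul (a b : G) (x : G → A) : shift a (shift b x) = shift (a * b) x := by
  funext h
  simp [shift, mul_assoc]

lemma shift_one (x : G → A) : shift (1 : G) x = x := by
  funext h
  simp [shift]

lemma shift_shift_inv (a : G) (x : G → A) : shift a (shift a⁻¹ x) = x := by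
  rw [shift_mul]
  simp [shift_one]

lemma shift_inv_shift (a : G) (x : G → A) : shift a⁻¹ (shift a x) = x := by
  rw [shift_mul]
  simp [shift_one]

end ShiftLemmas

namespace TCtx

variable {G : Type*} [Group G] {r : ℕ} (c : TCtx G r)

lemma exists_big_D {K : Set ℕ} (hK : K.Infinite) (h : G) : ∃ k ∈ K, h ∈ c.D k := by
  obtain ⟨k₀, hk₀⟩ := c.hcoverD h
  obtain ⟨k, hk, hlt⟩ := hK.exists_gt k₀
  exact ⟨k, hk, c.D_le hlt.le hk₀⟩

lemma exists_big_D₂ {K : Set ℕ} (hK : K.Infinite) (h h' : G) :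
    ∃ k ∈ K, h ∈ c.D k ∧ h' ∈ c.D k := by
  obtain ⟨k₀, hk₀⟩ := c.hcoverD h
  obtain ⟨k₁, hk₁⟩ := c.hcoverD h'
  obtain ⟨k, hk, hlt⟩ := hK.exists_gt (max k₀ k₁)
  exact ⟨k, hk, c.D_le (le_of_lt (lt_of_le_of_lt (le_max_left _ _) hlt)) hk₀,
    c.D_le (le_of_lt (lt_of_le_of_lt (le_max_right _ _) hlt)) hk₁⟩

/-- Approximation of an element of the orbit closure, with phases pigeonholed in `D n`. -/
lemma exists_approx {X : Set (G → Fin r)} (hX : X = closure {y | ∃ g : G, y = shift g c.η})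
    {x : G → Fin r} (hx : x ∈ X) (n : ℕ) :
    ∃ v ∈ c.D n, ∃ δ : ℕ → G, ∃ K : Set ℕ, K.Infinite ∧ (∀ k ∈ K, δ k ∈ c.Γ n) ∧
      ∀ k ∈ K, ∀ h ∈ c.D k, x h = c.η (δ k * (v * h)) := by
  have hcl : ∀ k : ℕ, ∃ w : G, ∀ h ∈ c.D k, x h = c.η (w * h) := by
    intro k
    have hxc : x ∈ closure {y | ∃ g : G, y = shift g c.η} := hX ▸ hx
    set O : Set (G → Fin r) := (c.D k : Set G).pi (fun h => {x h}) with hO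
    have hOopen : IsOpen O := isOpen_set_pi (c.D k).finite_toSet (fun i _ => isOpen_discrete _)
    have hxO : x ∈ O := fun i _ => rfl
    obtain ⟨y, hyO, g, rfl⟩ := _root_.mem_closure_iff.1 hxc O hOopen hxO
    refine ⟨g⁻¹, fun h hh => ?_⟩
    have := hyO h hh
    simp only [Set.mem_singleton_iff] at this
    rw [← this, shift_apply]
  choose w hw using hcl
  have hdec : ∀ k, ∃ p : G × G, p.1 ∈ c.Γ n ∧ p.2 ∈ c.D n ∧ w k = p.1 * p.2 := by
    intro k
    obtain ⟨δ, u, h1, h2, h3⟩ := c.exists_dec n (w k)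
    exact ⟨(δ, u), h1, h2, h3⟩
  choose p hp1 hp2 hp3 using hdec
  have hpigeon : ∃ v ∈ c.D n, {k | (p k).2 = v}.Infinite := by
    by_contra hcon
    push_neg at hcon
    have hfin : (Set.univ : Set ℕ).Finite := by
      have hsub : (Set.univ : Set ℕ) ⊆ ⋃ v ∈ (c.D n : Set G), {k | (p k).2 = v} := by
        intro k _
        exact Set.mem_biUnion (hp2 k) rfl
      refine Set.Finite.subset (Set.Finite.biUnion (c.D n).finite_toSet ?_) hsub
      intro v hv
      rcases (hcon v hv) with h
      exact h
    exact Set.infinite_univ hfin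
  obtain ⟨v, hv, hK⟩ := hpigeon
  refine ⟨v, hv, fun k => (p k).1, {k | (p k).2 = v}, hK, fun k _ => hp1 k, ?_⟩
  intro k hk h hh
  rw [hw k h hh, hp3 k, hk]
  rw [mul_assoc]

/-- The phase `v` obtained from the approximation satisfies `shift v x ∈ C n`. -/
lemma per_shift_eq {x : G → Fin r} {n : ℕ} (hn : 1 ≤ n) {v : G} {δ : ℕ → G} {K : Set ℕ}
    (hK : K.Infinite) (hδ : ∀ k ∈ K, δ k ∈ c.Γ n)
    (happrox : ∀ k ∈ K, ∀ h ∈ c.D k, x h = c.η (δ k * (v * h))) (α : Fin r) :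
    Per (shift v x) (c.Γ n) α = Per c.η (c.Γ n) α := by
  have hval : ∀ g γ : G, γ ∈ c.Γ n → ∃ γ' ∈ c.Γ n, shift v x (γ * g) = c.η (γ' * g) := by
    intro g γ hγ
    obtain ⟨k, hk, hD⟩ := c.exists_big_D hK (v⁻¹ * (γ * g))
    refine ⟨δ k * γ, (c.Γ n).mul_mem (hδ k hk) hγ, ?_⟩
    rw [shift_apply, happrox k hk _ hD]
    congr 1
    group
  ext g
  constructor
  · intro hg
    obtain ⟨j, hj⟩ := c.L_cover g
    rcases Nat.lt_or_ge j n with hjn | hjn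
    · -- determine α
      obtain ⟨γ', hγ', he⟩ := hval g 1 (c.Γ n).one_mem
      have h1 : shift v x (1 * g) = α := hg 1 (c.Γ n).one_mem
      have h2 : c.η (γ' * g) = sym c.hr j := c.eta_L (c.L_inv hjn hγ' hj)
      have hα : sym c.hr j = α := by rw [← h2, ← he, h1]
      rw [c.per_eta hn]
      exact ⟨j, hjn, hj, hα⟩
    · exfalso
      have havoid : ∀ i < n, g ∉ c.L i := fun i hi hL => c.L_disj (by omega) hL hj
      obtain ⟨γ₁, hγ₁, h₁⟩ := c.exists_J_in_coset (m := n) havoid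
      obtain ⟨γ₂, hγ₂, h₂⟩ := c.exists_J_succ_in_coset (m := n) havoid
      obtain ⟨n', γ', hγ', hz₀, hβ⟩ :
          ∃ n' γ', γ' ∈ c.Γ n ∧ γ' * g ∈ c.J n' ∧ sym c.hr n' ≠ α := by
        by_cases hc : sym c.hr n = α
        · exact ⟨n + 1, γ₂, hγ₂, h₂, fun h => c.sym_succ_ne (hc.trans h.symm)⟩
        · exact ⟨n, γ₁, hγ₁, h₁, hc⟩
      set z₀ := γ' * g with hz₀def
      obtain ⟨k, hk, hklt⟩ := hK.exists_gt (max (n' + 1) n)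
      have hkn' : n' + 1 ≤ k := le_of_lt (lt_of_le_of_lt (le_max_left _ _) hklt)
      have hkn : n ≤ k := le_of_lt (lt_of_le_of_lt (le_max_right _ _) hklt)
      set c₀ := δ k * v with hc₀
      obtain ⟨s, d, hs, hd, hsd⟩ := c.exists_dec k (c₀⁻¹ * z₀)
      -- value of η at `c₀ * d`
      have ht : c₀ * s⁻¹ * c₀⁻¹ ∈ c.Γ k := by
        have := (c.hnormal k).conj_mem s⁻¹ ((c.Γ k).inv_mem hs) c₀
        simpa [mul_assoc] using this
      have hcd : c₀ * d = (c₀ * s⁻¹ * c₀⁻¹) * z₀ := by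
        have : d = s⁻¹ * (c₀⁻¹ * z₀) := by rw [hsd]; group
        rw [this]
        group
      have hηcd : c.η (c₀ * d) = sym c.hr n' := by
        rw [hcd]
        refine c.eta_L (c.mem_L_iff'.2 ⟨c₀ * s⁻¹ * c₀⁻¹, c.gamma_le hkn' ht, z₀, hz₀, rfl⟩)
      -- `d` is of the form `v⁻¹ * (γ'' * g)`
      have hγ'' : v * s⁻¹ * v⁻¹ * (δ k)⁻¹ * γ' ∈ c.Γ n := by
        refine (c.Γ n).mul_mem ((c.Γ n).mul_mem ?_ ((c.Γ n).inv_mem (hδ k hk))) hγ'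
        have := (c.hnormal k).conj_mem s⁻¹ ((c.Γ k).inv_mem hs) v
        exact c.gamma_le hkn (by simpa [mul_assoc] using this)
      have hde : d = v⁻¹ * ((v * s⁻¹ * v⁻¹ * (δ k)⁻¹ * γ') * g) := by
        have hd' : d = s⁻¹ * (c₀⁻¹ * z₀) := by rw [hsd]; group
        rw [hd', hc₀, hz₀def]
        group
      have h1 : x d = α := by
        have := hg (v * s⁻¹ * v⁻¹ * (δ k)⁻¹ * γ') hγ''
        rw [shift_apply] at this
        rw [hde]
        exact this
      have h2 : x d = sym c.hr n' := by
        rw [happrox k hk d hd]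
        have e : δ k * (v * d) = c₀ * d := by rw [hc₀]; group
        rw [e, hηcd]
      exact hβ (by rw [← h2, h1])
  · intro hg γ hγ
    obtain ⟨γ', hγ', he⟩ := hval g γ hγ
    rw [he]
    exact hg γ' hγ'

/-- K8: uniqueness of the phase. -/
lemma phase_unique {n : ℕ} (hn : 1 ≤ n) {x : G → Fin r} {v₁ v₂ : G}
    (hv₁ : v₁ ∈ c.D n) (hv₂ : v₂ ∈ c.D n)
    (h₁ : ∀ α, Per (shift v₁ x) (c.Γ n) α = Per c.η (c.Γ n) α)
    (h₂ : ∀ α, Per (shift v₂ x) (c.Γ n) α = Per c.η (c.Γ n) α) : v₁ = v₂ := by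
  have hmem : v₂ * v₁⁻¹ ∈ c.Γ n := by
    refine c.mem_gamma_of_per_inv hn (fun α g hg => ?_)
    rw [← h₁ α] at hg
    rw [← h₂ α]
    intro γ hγ
    have hconj : v₁ * v₂⁻¹ * γ * v₂ * v₁⁻¹ ∈ c.Γ n := by
      have := (c.hnormal n).conj_mem γ hγ (v₁ * v₂⁻¹)
      simpa [mul_assoc] using this
    have := hg _ hconj
    rw [shift_apply] at this ⊢
    rw [← this]
    congr 1
    group
  have h1 : (1 : G) * v₂ = (v₂ * v₁⁻¹) * v₁ := by group
  exact ((c.fund_unique (c.Γ n).one_mem hv₂ hmem hv₁ h1).2).symm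

/-- K9: elements of `C n` are constant on `J n`. -/
lemma const_on_J {X : Set (G → Fin r)} (hX : X = closure {y | ∃ g : G, y = shift g c.η})
    {n : ℕ} (hn : 1 ≤ n) {y : G → Fin r} (hy : y ∈ X)
    (hyPer : ∀ α, Per y (c.Γ n) α = Per c.η (c.Γ n) α)
    {g g' : G} (hg : g ∈ c.J n) (hg' : g' ∈ c.J n) : y g = y g' := by
  obtain ⟨v, hv, δ, K, hK, hδ, happ⟩ := c.exists_approx hX hy n
  have hPer : ∀ α, Per (shift v y) (c.Γ n) α = Per c.η (c.Γ n) α :=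
    fun α => c.per_shift_eq hn hK hδ happ α
  have h1 : ∀ α, Per (shift 1 y) (c.Γ n) α = Per c.η (c.Γ n) α := by
    intro α
    rw [shift_one]
    exact hyPer α
  have hv1 : v = (1 : G) := c.phase_unique hn hv (c.hone n) hPer h1
  obtain ⟨k, hk, hgD, hg'D⟩ := c.exists_big_D₂ hK g g'
  have e1 : y g = c.η (δ k * g) := by
    have := happ k hk g hgD
    rwa [hv1, one_mul] at this
  have e2 : y g' = c.η (δ k * g') := by
    have := happ k hk g' hg'D
    rwa [hv1, one_mul] at this
  obtain ⟨j, hj⟩ := c.L_cover (δ k * g)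
  obtain ⟨k', hk'⟩ := c.hcoverD (δ k)
  have hj' : δ k * g' ∈ c.L j := (c.level_const hn k' (δ k) (hδ k hk) hk' g g' hg hg' j).1 hj
  rw [e1, e2, c.eta_L hj, c.eta_L hj']

/-- The orbit closure is shift-invariant. -/
lemma X_invariant {X : Set (G → Fin r)} (hX : X = closure {y | ∃ g : G, y = shift g c.η})
    (g : G) {x : G → Fin r} (hx : x ∈ X) : shift g x ∈ X := by
  have hcont : Continuous (shift g : (G → Fin r) → (G → Fin r)) :=
    continuous_pi (fun h => continuous_apply (g⁻¹ * h))
  have hSS : shift g '' {y : G → Fin r | ∃ w : G, y = shift w c.η} =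
      {y : G → Fin r | ∃ w : G, y = shift w c.η} := by
    ext y
    constructor
    · rintro ⟨z, ⟨w, rfl⟩, rfl⟩
      exact ⟨g * w, (shift_mul g w c.η)⟩
    · rintro ⟨w, rfl⟩
      refine ⟨shift (g⁻¹ * w) c.η, ⟨g⁻¹ * w, rfl⟩, ?_⟩
      rw [shift_mul]
      congr 1
      group
  rw [hX] at hx ⊢
  have h1 := Set.mem_image_of_mem (shift g) hx
  have h2 := image_closure_subset_closure_image (f := shift g)
    (s := {y : G → Fin r | ∃ w : G, y = shift w c.η}) hcont h1
  rwa [hSS] at h2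

section Measure

variable [Countable G]

lemma measurable_shiftmap (g : G) : Measurable (shift g : (G → Fin r) → (G → Fin r)) :=
  measurable_pi_lambda _ (fun h => measurable_pi_apply (g⁻¹ * h))

lemma measurableSet_cyl (z : G) (a : Fin r) : MeasurableSet {x : G → Fin r | x z = a} := by
  have he : {x : G → Fin r | x z = a} = (fun x : G → Fin r => x z) ⁻¹' {a} := rfl
  rw [he]
  exact (measurable_pi_apply z) (measurableSet_singleton a)

lemma measurableSet_perSet (n : ℕ) (g : G) (α : Fin r) :
    MeasurableSet {x : G → Fin r | ∀ γ ∈ c.Γ n, x (γ * g) = α} := by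
  have : {x : G → Fin r | ∀ γ ∈ c.Γ n, x (γ * g) = α} =
      ⋂ γ : c.Γ n, {x : G → Fin r | x ((γ : G) * g) = α} := by
    ext x
    simp only [Set.mem_setOf_eq, Set.mem_iInter, Subtype.forall]
  rw [this]
  exact MeasurableSet.iInter (fun γ => measurableSet_cyl _ _)

lemma measurableSet_X {X : Set (G → Fin r)}
    (hX : X = closure {y | ∃ g : G, y = shift g c.η}) : MeasurableSet X := by
  rw [hX]
  exact isClosed_closure.measurableSet

lemma measurableSet_CC {X : Set (G → Fin r)}
    (hX : X = closure {y | ∃ g : G, y = shift g c.η}) (n : ℕ) :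
    MeasurableSet {x : G → Fin r | x ∈ X ∧ ∀ α, Per x (c.Γ n) α = Per c.η (c.Γ n) α} := by
  have he : {x : G → Fin r | x ∈ X ∧ ∀ α, Per x (c.Γ n) α = Per c.η (c.Γ n) α} =
      X ∩ ⋂ α : Fin r, ⋂ g : G,
        {x : G → Fin r | (∀ γ ∈ c.Γ n, x (γ * g) = α) ↔ g ∈ Per c.η (c.Γ n) α} := by
    ext x
    simp only [Set.mem_setOf_eq, Set.mem_inter_iff, Set.mem_iInter]
    constructor
    · rintro ⟨h1, h2⟩
      refine ⟨h1, fun α g => ?_⟩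
      rw [← h2 α]
      exact Iff.rfl
    · rintro ⟨h1, h2⟩
      refine ⟨h1, fun α => Set.ext (fun g => (h2 α g))⟩
  rw [he]
  refine (c.measurableSet_X hX).inter (MeasurableSet.iInter fun α => MeasurableSet.iInter fun g => ?_)
  by_cases hmem : g ∈ Per c.η (c.Γ n) α
  · have : {x : G → Fin r | (∀ γ ∈ c.Γ n, x (γ * g) = α) ↔ g ∈ Per c.η (c.Γ n) α} =
        {x : G → Fin r | ∀ γ ∈ c.Γ n, x (γ * g) = α} := by
      ext x; simp [hmem]
    rw [this]
    exact c.measurableSet_perSet n g α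
  · have : {x : G → Fin r | (∀ γ ∈ c.Γ n, x (γ * g) = α) ↔ g ∈ Per c.η (c.Γ n) α} =
        {x : G → Fin r | ∀ γ ∈ c.Γ n, x (γ * g) = α}ᶜ := by
      ext x; simp [hmem]
    rw [this]
    exact (c.measurableSet_perSet n g α).compl

lemma measurableSet_CCi {X : Set (G → Fin r)}
    (hX : X = closure {y | ∃ g : G, y = shift g c.η}) (n : ℕ) (j : Fin r) :
    MeasurableSet {x : G → Fin r |
      (x ∈ X ∧ ∀ α, Per x (c.Γ n) α = Per c.η (c.Γ n) α) ∧ ∀ g ∈ c.J n, x g = j} := by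
  have he : {x : G → Fin r |
      (x ∈ X ∧ ∀ α, Per x (c.Γ n) α = Per c.η (c.Γ n) α) ∧ ∀ g ∈ c.J n, x g = j} =
      {x : G → Fin r | x ∈ X ∧ ∀ α, Per x (c.Γ n) α = Per c.η (c.Γ n) α} ∩
        ⋂ g ∈ c.J n, {x : G → Fin r | x g = j} := by
    ext x
    simp only [Set.mem_setOf_eq, Set.mem_inter_iff, Set.mem_iInter]
  rw [he]
  exact (c.measurableSet_CC hX n).inter
    (MeasurableSet.biInter (Set.to_countable _) (fun g _ => measurableSet_cyl _ _))

lemma measurableSet_C0 {X : Set (G → Fin r)}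
    (hX : X = closure {y | ∃ g : G, y = shift g c.η}) (j : Fin r) :
    MeasurableSet {x : G → Fin r | x ∈ X ∧ x 1 = j} := by
  have he : {x : G → Fin r | x ∈ X ∧ x 1 = j} = X ∩ {x : G → Fin r | x 1 = j} := rfl
  rw [he]
  exact (c.measurableSet_X hX).inter (measurableSet_cyl _ _)

end Measure

section Main

variable [Countable G]

lemma cover_X {X : Set (G → Fin r)} (hX : X = closure {y | ∃ g : G, y = shift g c.η})
    {n : ℕ} (hn : 1 ≤ n) :
    X = ⋃ v ∈ c.D n, (shift v) ⁻¹'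
      {x : G → Fin r | x ∈ X ∧ ∀ α, Per x (c.Γ n) α = Per c.η (c.Γ n) α} := by
  ext x
  constructor
  · intro hx
    obtain ⟨v, hv, δ, K, hK, hδ, happ⟩ := c.exists_approx hX hx n
    refine Set.mem_biUnion hv ?_
    exact Set.mem_preimage.2 ⟨c.X_invariant hX v hx, fun α => c.per_shift_eq hn hK hδ happ α⟩
  · intro hx
    obtain ⟨v, hv, hpre⟩ := Set.mem_iUnion₂.1 hx
    have h1 : shift v x ∈ X := (Set.mem_preimage.1 hpre).1
    have h2 := c.X_invariant hX v⁻¹ h1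
    rwa [shift_inv_shift] at h2

lemma pairwise_disjoint_pre {X : Set (G → Fin r)}
    {n : ℕ} (hn : 1 ≤ n) :
    (↑(c.D n) : Set G).PairwiseDisjoint (fun v => (shift v) ⁻¹'
      {x : G → Fin r | x ∈ X ∧ ∀ α, Per x (c.Γ n) α = Per c.η (c.Γ n) α}) := by
  intro v hv v' hv' hne
  rw [Function.onFun, Set.disjoint_left]
  intro x hxv hxv'
  exact hne (c.phase_unique hn (Finset.mem_coe.1 hv) (Finset.mem_coe.1 hv')
    (fun α => (Set.mem_preimage.1 hxv).2 α) (fun α => (Set.mem_preimage.1 hxv').2 α))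

lemma measure_CC {X : Set (G → Fin r)} (hX : X = closure {y | ∃ g : G, y = shift g c.η})
    {n : ℕ} (hn : 1 ≤ n) (μ : Measure (G → Fin r))
    (hinv : ∀ g : G, Measure.map (shift g) μ = μ) (hμX : μ X = 1) :
    μ {x : G → Fin r | x ∈ X ∧ ∀ α, Per x (c.Γ n) α = Per c.η (c.Γ n) α} =
      (((c.D n).card : ENNReal))⁻¹ := by
  set CC := {x : G → Fin r | x ∈ X ∧ ∀ α, Per x (c.Γ n) α = Per c.η (c.Γ n) α} with hCC
  have hCCm : MeasurableSet CC := c.measurableSet_CC hX n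
  have hpre : ∀ v : G, μ ((shift v) ⁻¹' CC) = μ CC := by
    intro v
    conv_rhs => rw [← hinv v]
    rw [Measure.map_apply (measurable_shiftmap v) hCCm]
  have hsum : ((c.D n).card : ENNReal) * μ CC = 1 := by
    have h1 : μ X = ∑ v ∈ c.D n, μ ((shift v) ⁻¹' CC) := by
      conv_lhs => rw [c.cover_X hX hn]
      exact measure_biUnion_finset (c.pairwise_disjoint_pre hn)
        (fun v _ => (measurable_shiftmap v) hCCm)
    rw [hμX] at h1
    have h2 : ∑ v ∈ c.D n, μ ((shift v) ⁻¹' CC) = (c.D n).card • μ CC := by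
      rw [Finset.sum_congr rfl (fun v _ => hpre v), Finset.sum_const]
    rw [h2, nsmul_eq_mul] at h1
    exact h1.symm
  have hc0 : (((c.D n).card : ℕ) : ENNReal) ≠ 0 := by
    simp only [ne_eq, Nat.cast_eq_zero]
    intro h
    exact absurd (Finset.card_eq_zero.1 h ▸ c.hone n) (by simp)
  have hct : (((c.D n).card : ℕ) : ENNReal) ≠ ⊤ := ENNReal.natCast_ne_top _
  calc μ CC = 1 * μ CC := (one_mul _).symm
    _ = ((((c.D n).card : ℕ) : ENNReal)⁻¹ * (((c.D n).card : ℕ) : ENNReal)) * μ CC := by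
        rw [ENNReal.inv_mul_cancel hc0 hct]
    _ = (((c.D n).card : ℕ) : ENNReal)⁻¹ * ((((c.D n).card : ℕ) : ENNReal) * μ CC) := by
        rw [mul_assoc]
    _ = (((c.D n).card : ℕ) : ENNReal)⁻¹ := by rw [hsum, mul_one]

lemma inter_pre_eq_J {X : Set (G → Fin r)} (hX : X = closure {y | ∃ g : G, y = shift g c.η})
    {n : ℕ} (hn : 1 ≤ n) (j : Fin r) {v : G} (hvJ : v ∈ c.J n) :
    {x : G → Fin r | x ∈ X ∧ x 1 = j} ∩ ((shift v) ⁻¹'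
        {x : G → Fin r | x ∈ X ∧ ∀ α, Per x (c.Γ n) α = Per c.η (c.Γ n) α}) =
      (shift v) ⁻¹' {x : G → Fin r |
        (x ∈ X ∧ ∀ α, Per x (c.Γ n) α = Per c.η (c.Γ n) α) ∧ ∀ g ∈ c.J n, x g = j} := by
  ext x
  simp only [Set.mem_inter_iff, Set.mem_preimage, Set.mem_setOf_eq]
  constructor
  · rintro ⟨⟨hxX, hx1⟩, hCC⟩
    refine ⟨hCC, fun g hg => ?_⟩
    have hconst := c.const_on_J hX hn hCC.1 hCC.2 hg hvJ
    rw [hconst, shift_apply, inv_mul_cancel]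
    exact hx1
  · rintro ⟨hCC, hval⟩
    have hxX : x ∈ X := by
      have := c.X_invariant hX v⁻¹ hCC.1
      rwa [shift_inv_shift] at this
    refine ⟨⟨hxX, ?_⟩, hCC⟩
    have := hval v hvJ
    rwa [shift_apply, inv_mul_cancel] at this

lemma pre_val {X : Set (G → Fin r)}
    {n : ℕ} (hn : 1 ≤ n) {m : ℕ} (hmn : m < n) {v : G} (hvL : v ∈ c.L m) {x : G → Fin r}
    (hx : x ∈ (shift v) ⁻¹'
      {x : G → Fin r | x ∈ X ∧ ∀ α, Per x (c.Γ n) α = Per c.η (c.Γ n) α}) :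
    x 1 = sym c.hr m := by
  have hx' := Set.mem_preimage.1 hx
  have hPer : v ∈ Per (shift v x) (c.Γ n) (sym c.hr m) := by
    rw [hx'.2 (sym c.hr m), c.per_eta hn]
    exact ⟨m, hmn, hvL, rfl⟩
  have := hPer 1 (c.Γ n).one_mem
  rwa [one_mul, shift_apply, inv_mul_cancel] at this

open scoped Classical in
lemma measure_C0 {X : Set (G → Fin r)} (hX : X = closure {y | ∃ g : G, y = shift g c.η})
    {n : ℕ} (hn : 1 ≤ n) (j : Fin r) (μ : Measure (G → Fin r))
    (hinv : ∀ g : G, Measure.map (shift g) μ = μ) (hμX : μ X = 1) :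
    μ {x : G → Fin r | x ∈ X ∧ x 1 = j} =
      ((c.D n).filter (fun v => v ∈ c.J n)).card •
          μ {x : G → Fin r |
            (x ∈ X ∧ ∀ α, Per x (c.Γ n) α = Per c.η (c.Γ n) α) ∧ ∀ g ∈ c.J n, x g = j}
        + ∑ v ∈ (c.D n).filter (fun v => v ∉ c.J n),
            (if c.η v = j then (((c.D n).card : ℕ) : ENNReal)⁻¹ else 0) := by
  set CC := {x : G → Fin r | x ∈ X ∧ ∀ α, Per x (c.Γ n) α = Per c.η (c.Γ n) α} with hCCdef
  set CCi := {x : G → Fin r |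
      (x ∈ X ∧ ∀ α, Per x (c.Γ n) α = Per c.η (c.Γ n) α) ∧ ∀ g ∈ c.J n, x g = j} with hCCidef
  set A := {x : G → Fin r | x ∈ X ∧ x 1 = j} with hAdef
  have hCCm : MeasurableSet CC := c.measurableSet_CC hX n
  have hCCim : MeasurableSet CCi := c.measurableSet_CCi hX n j
  have hAm : MeasurableSet A := c.measurableSet_C0 hX j
  -- partition of A
  have hcover : A = ⋃ v ∈ c.D n, (A ∩ (shift v) ⁻¹' CC) := by
    ext x
    constructor
    · intro hx
      have hxX : x ∈ X := hx.1
      rw [c.cover_X hX hn] at hxX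
      obtain ⟨v, hv, hpre⟩ := Set.mem_iUnion₂.1 hxX
      exact Set.mem_biUnion hv ⟨hx, hpre⟩
    · intro hx
      obtain ⟨v, hv, hpre⟩ := Set.mem_iUnion₂.1 hx
      exact hpre.1
  have hdisj : (↑(c.D n) : Set G).PairwiseDisjoint (fun v => A ∩ (shift v) ⁻¹' CC) := by
    intro v hv v' hv' hne
    have := c.pairwise_disjoint_pre (X := X) hn hv hv' hne
    exact this.mono Set.inter_subset_right Set.inter_subset_right
  have hsum : μ A = ∑ v ∈ c.D n, μ (A ∩ (shift v) ⁻¹' CC) := by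
    conv_lhs => rw [hcover]
    exact measure_biUnion_finset hdisj
      (fun v _ => hAm.inter ((measurable_shiftmap v) hCCm))
  -- evaluate each term
  have hterm : ∀ v ∈ c.D n, μ (A ∩ (shift v) ⁻¹' CC) =
      if v ∈ c.J n then μ CCi else (if c.η v = j then (((c.D n).card : ℕ) : ENNReal)⁻¹ else 0) := by
    intro v hv
    by_cases hvJ : v ∈ c.J n
    · rw [if_pos hvJ, c.inter_pre_eq_J hX hn j hvJ]
      conv_rhs => rw [← hinv v]
      rw [Measure.map_apply (measurable_shiftmap v) hCCim]
    · rw [if_neg hvJ]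
      obtain ⟨m, hm⟩ := c.L_cover v
      have hmn : m < n := by
        by_contra hcon
        refine hvJ ((c.mem_J_iff hn).2 ⟨hv, fun i hi hL => ?_⟩)
        exact c.L_disj (by omega) hL hm
      have hηv : c.η v = sym c.hr m := c.eta_L hm
      by_cases hj : sym c.hr m = j
      · rw [hηv, if_pos hj]
        have heq : A ∩ (shift v) ⁻¹' CC = (shift v) ⁻¹' CC := by
          refine Set.inter_eq_right.2 (fun x hx => ?_)
          refine ⟨?_, ?_⟩
          · have h1 : shift v x ∈ X := (Set.mem_preimage.1 hx).1
            have h2 := c.X_invariant hX v⁻¹ h1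
            rwa [shift_inv_shift] at h2
          · rw [c.pre_val hn hmn hm hx]
            exact hj
        rw [heq]
        have := c.measure_CC hX hn μ hinv hμX
        conv_lhs =>
          rw [show μ ((shift v) ⁻¹' CC) = (Measure.map (shift v) μ) CC from
            (Measure.map_apply (measurable_shiftmap v) hCCm).symm, hinv v]
        exact this
      · rw [hηv, if_neg hj]
        have heq : A ∩ (shift v) ⁻¹' CC = ∅ := by
          ext x
          simp only [Set.mem_inter_iff, Set.mem_empty_iff_false, iff_false, not_and]
          intro hxA hxpre
          exact hj (by rw [← c.pre_val hn hmn hm hxpre, hxA.2])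
        rw [heq, measure_empty]
  rw [hsum, Finset.sum_congr rfl hterm, Finset.sum_ite, Finset.sum_const]

end Main

end TCtx

theorem statement17 {G : Type*} [Group G] [Countable G]
    {r : ℕ} (hr : 1 < r)
    -- the sequence of subgroups (with the convention `Γ 0 = G`, the data of the paper being
    -- `Γ 1 > Γ 2 > ⋯`)
    (Γ : ℕ → Subgroup G) (hΓ0 : Γ 0 = ⊤) (hanti : StrictAnti Γ)
    (hnormal : ∀ n, (Γ n).Normal) (hfi : ∀ n, (Γ n).FiniteIndex)
    (hint : (⨅ n, Γ n) = ⊥) (hidx : ∀ n, 3 ≤ (Γ (n + 1)).relIndex (Γ n))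
    -- the fundamental domains
    (D : ℕ → Finset G) (hD0 : D 0 = {1}) (hfund : ∀ n, IsFundDomain (Γ n) (D n))
    (hone : ∀ n, (1 : G) ∈ D n) (hDmono : ∀ n, D n ⊆ D (n + 1))
    (hcoverD : ∀ g : G, ∃ n, g ∈ D n)
    (hdecomp : ∀ i j, i < j →
      (D j : Set G) = ⋃ v ∈ (D j : Set G) ∩ (Γ i : Set G), v • (D i : Set G))
    -- the sets `J m`
    (J : ℕ → Set G) (hJ0 : J 0 = {1})
    (hJ : ∀ m, 1 ≤ m → J m = (D m : Set G) \ ⋃ i < m, J i * ((Γ (i + 1) : Subgroup G) : Set G))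
    -- the Toeplitz array `η`
    (η : G → Fin r)
    (hηdef : ∀ (m : ℕ), ∀ h ∈ J m, ∀ g ∈ Γ (m + 1), η (h * g) = sym hr m)
    -- `X` is the orbit closure of `η`
    (X : Set (G → Fin r)) (hX : X = closure {y | ∃ g : G, y = shift g η})
    -- the sets `C n` and `C_{n,i}`
    (C : ℕ → Set (G → Fin r))
    (hC : ∀ n, C n = {x | x ∈ X ∧ ∀ a : Fin r, Per x (Γ n) a = Per η (Γ n) a})
    (Ci : ℕ → Fin r → Set (G → Fin r))
    (hCi : ∀ n (i : Fin r), Ci n i = {x | x ∈ C n ∧ ∀ g ∈ J n, x g = i}) :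
    -- if two invariant measures agree on the symbol cylinders `C_{0,i}`, then they agree on
    -- every element `σ^{v⁻¹} C_{n,i}` of each clopen partition `𝒫_n`
    ∀ μ ν : Measure (G → Fin r),
      IsProbabilityMeasure μ → (∀ g : G, Measure.map (shift g) μ = μ) → μ X = 1 →
      IsProbabilityMeasure ν → (∀ g : G, Measure.map (shift g) ν = ν) → ν X = 1 →
      (∀ j : Fin r, μ {x | x ∈ X ∧ x 1 = j} = ν {x | x ∈ X ∧ x 1 = j}) →
      ∀ n, 1 ≤ n → ∀ i : Fin r, ∀ v ∈ D n,
        μ (shift v⁻¹ '' Ci n i) = ν (shift v⁻¹ '' Ci n i) := by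
  classical
  intro μ ν hμP hμinv hμX hνP hνinv hνX hagree n hn i v hv
  set c : TCtx G r := ⟨hr, Γ, D, J, η, hΓ0, hanti, hnormal, hD0, hfund, hone, hDmono,
    hcoverD, hdecomp, hJ0, hJ, hηdef⟩ with hcdef
  have hX' : X = closure {y | ∃ g : G, y = shift g c.η} := hX
  set CCi := {x : G → Fin r |
    (x ∈ X ∧ ∀ α, Per x (c.Γ n) α = Per c.η (c.Γ n) α) ∧ ∀ g ∈ c.J n, x g = i} with hCCidef
  have hCCim : MeasurableSet CCi := c.measurableSet_CCi hX' n i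
  have himg : shift v⁻¹ '' Ci n i = (shift v) ⁻¹' CCi := by
    rw [hCi n i, hC n]
    ext x
    constructor
    · rintro ⟨y, hy, rfl⟩
      rw [Set.mem_preimage, shift_shift_inv]
      exact hy
    · intro hx
      exact ⟨shift v x, hx, by rw [shift_inv_shift]⟩
  have hpush : ∀ κ : Measure (G → Fin r), (∀ g : G, Measure.map (shift g) κ = κ) →
      κ ((shift v) ⁻¹' CCi) = κ CCi := by
    intro κ hinv
    conv_rhs => rw [← hinv v]
    rw [Measure.map_apply (TCtx.measurable_shiftmap v) hCCim]
  rw [himg, hpush μ hμinv, hpush ν hνinv]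
  -- main computation
  have hFμ := c.measure_C0 hX' hn i μ hμinv hμX
  have hFν := c.measure_C0 hX' hn i ν hνinv hνX
  have hagr := hagree i
  rw [hFμ, hFν] at hagr
  have hSne : (∑ w ∈ (c.D n).filter (fun w => w ∉ c.J n),
      (if c.η w = i then (((c.D n).card : ℕ) : ENNReal)⁻¹ else 0)) ≠ ⊤ := by
    refine (ENNReal.sum_lt_top.2 ?_).ne
    intro w hw
    split
    · exact ENNReal.inv_lt_top.2 (by
        have : (0 : ℕ) < (c.D n).card := Finset.card_pos.2 ⟨1, c.hone n⟩
        exact_mod_cast Nat.cast_pos.2 this)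
    · exact ENNReal.zero_lt_top
  have hb : ((c.D n).filter (fun w => w ∈ c.J n)).card • μ CCi =
      ((c.D n).filter (fun w => w ∈ c.J n)).card • ν CCi := by
    have h1 := hagr
    rw [add_comm _ (∑ w ∈ (c.D n).filter (fun w => w ∉ c.J n), _),
      add_comm _ (∑ w ∈ (c.D n).filter (fun w => w ∉ c.J n), _)] at h1
    exact (ENNReal.add_right_inj hSne).1 h1
  have hb0 : (((c.D n).filter (fun w => w ∈ c.J n)).card : ENNReal) ≠ 0 := by
    obtain ⟨w, hw⟩ := c.J_nonempty n
    have hwD : w ∈ c.D n := c.J_sub_D n hw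
    simp only [ne_eq, Nat.cast_eq_zero]
    exact Finset.card_ne_zero_of_mem (Finset.mem_filter.2 ⟨hwD, hw⟩)
  have hbt : (((c.D n).filter (fun w => w ∈ c.J n)).card : ENNReal) ≠ ⊤ :=
    ENNReal.natCast_ne_top _
  rw [nsmul_eq_mul, nsmul_eq_mul] at hb
  exact (ENNReal.mul_right_inj hb0 hbt).1 hb
end
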